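/- arXiv:2401.13135 — 10 statements merged into one kernel-verified Lean document; each statement's English description precedes it below -/
import Mathlib

section
/- Let S be a real Hilbert space equipped with a bounded symplectic form ω (a bounded, skew-symmetric, weakly nondegenerate bilinear form represented by a topological isomorphism). Then there exists an inner product ⟨·,·⟩₁ on S, equivalent to the original one, and a linear isometry J of (S, ⟨·,·⟩₁) with J² = -Id, such that ω(u,v) = ⟨Ju, v⟩₁ for all u, v ∈ S. -/
/-!
Write `ω u v = ⟪T u, v⟫`; skew-symmetry of `ω` says `T* = -T`, so `T*T = -T²` is self-adjoint,
commutes with `T` and is coercive because `T` is invertible. Its square root `P = |T|` is built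
without spectral theory: after scaling, `T*T / C = 1 - x` with `‖x‖ < 1`, and `1 - x = (1 - y)²`
where `y` is the fixed point of the contraction `y ↦ (x + y²) / 2`. Being a limit of polynomials
in `x`, `P` commutes with `T`; by uniqueness of the fixed point it is self-adjoint. The polar
decomposition `T = P J` then gives `J = P⁻¹ T` with `J² = P⁻² T² = -1`, the new inner product is
`⟪P u, v⟫`, and `ω u v = ⟪P (J u), v⟫`, `J* P J = P` are identities in the operator algebra.
-/

section BanachAlgebra

variable {A : Type*} [NormedRing A]

theorem norm_mul_self_sub_mul_self_le (y z : A) :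
    ‖y * y - z * z‖ ≤ (‖y‖ + ‖z‖) * ‖y - z‖ := by
  calc ‖y * y - z * z‖ = ‖y * (y - z) + (y - z) * z‖ := by noncomm_ring
    _ ≤ ‖y‖ * ‖y - z‖ + ‖y - z‖ * ‖z‖ := norm_add_le_of_le (norm_mul_le _ _) (norm_mul_le _ _)
    _ = (‖y‖ + ‖z‖) * ‖y - z‖ := by ring

variable [NormedAlgebra ℝ A]

theorem one_sub_sq_eq_one_sub_iff {x y : A} :
    (1 - y) ^ 2 = 1 - x ↔ (2⁻¹ : ℝ) • (x + y * y) = y := by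
  have e : (1 - y) ^ 2 - (1 - x) = x + y * y - (2 : ℝ) • y := by rw [two_smul]; noncomm_ring
  rw [inv_smul_eq_iff₀ two_ne_zero, ← sub_eq_zero, e, sub_eq_zero]

theorem eq_of_one_sub_sq_eq_one_sub_sq {y z : A} (hy : ‖y‖ < 1) (hz : ‖z‖ < 1)
    (h : (1 - y) ^ 2 = (1 - z) ^ 2) : y = z := by
  have hyz : y - z = (2⁻¹ : ℝ) • (y * y - z * z) := by
    have e : (1 - y) ^ 2 - (1 - z) ^ 2 = y * y - z * z - (2 : ℝ) • (y - z) := by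
      rw [two_smul]; noncomm_ring
    rw [h, sub_self, eq_comm, sub_eq_zero] at e
    rw [e, inv_smul_smul₀ two_ne_zero]
  by_contra hne
  have hpos : 0 < ‖y - z‖ := norm_pos_iff.2 (sub_ne_zero.2 hne)
  have : ‖y - z‖ ≤ 2⁻¹ * ((‖y‖ + ‖z‖) * ‖y - z‖) := by
    calc ‖y - z‖ = 2⁻¹ * ‖y * y - z * z‖ := by rw [hyz, norm_smul]; norm_num
      _ ≤ _ := by gcongr; exact norm_mul_self_sub_mul_self_le y z
  nlinarith

/-- The root is the fixed point of `y ↦ (x + y²) / 2`, a contraction of ratio `r` on the closed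
`r`-ball of the closed subalgebra generated by `x`. -/
theorem exists_mem_elemental_one_sub_sq_eq [CompleteSpace A] {x : A} {r : ℝ} (hx : ‖x‖ ≤ r)
    (hr : r < 1) : ∃ y ∈ Algebra.elemental ℝ x, ‖y‖ ≤ r ∧ (1 - y) ^ 2 = 1 - x := by
  have hr0 : 0 ≤ r := (norm_nonneg x).trans hx
  set f : A → A := fun y ↦ (2⁻¹ : ℝ) • (x + y * y)
  set s := (Algebra.elemental ℝ x : Set A) ∩ Metric.closedBall 0 r
  have hsc : IsComplete s :=
    ((Algebra.elemental.isClosed ℝ x).inter Metric.isClosed_closedBall).isComplete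
  have hsf : Set.MapsTo f s s := by
    rintro y ⟨hyK, hyr⟩
    rw [mem_closedBall_zero_iff] at hyr
    refine ⟨Subalgebra.smul_mem _
      (add_mem (Algebra.elemental.self_mem ℝ x) (mul_mem hyK hyK)) _, ?_⟩
    rw [mem_closedBall_zero_iff]
    calc ‖f y‖ ≤ 2⁻¹ * (‖x‖ + ‖y‖ * ‖y‖) := by
          rw [norm_smul]; norm_num
          exact norm_add_le_of_le le_rfl (norm_mul_le _ _)
      _ ≤ r := by nlinarith [norm_nonneg y]
  have hf : ContractingWith ⟨r, hr0⟩ (hsf.restrict f s s) := by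
    refine ⟨hr, LipschitzWith.of_dist_le_mul fun ⟨y, _, hy⟩ ⟨z, _, hz⟩ ↦ ?_⟩
    rw [mem_closedBall_zero_iff] at hy hz
    simp only [Subtype.dist_eq, Set.MapsTo.val_restrict_apply, dist_eq_norm, f]
    calc ‖(2⁻¹ : ℝ) • (x + y * y) - (2⁻¹ : ℝ) • (x + z * z)‖ = 2⁻¹ * ‖y * y - z * z‖ := by
          rw [← smul_sub, add_sub_add_left_eq_sub, norm_smul]; norm_num
      _ ≤ 2⁻¹ * ((‖y‖ + ‖z‖) * ‖y - z‖) := by gcongr; exact norm_mul_self_sub_mul_self_le y z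
      _ ≤ r * ‖y - z‖ := by nlinarith [norm_nonneg (y - z)]
  obtain ⟨y, ⟨hyK, hyr⟩, hfix, -⟩ := hf.exists_fixedPoint' hsc hsf (x := 0)
    ⟨zero_mem _, by simp [hr0]⟩ (edist_ne_top _ _)
  exact ⟨y, hyK, mem_closedBall_zero_iff.1 hyr, one_sub_sq_eq_one_sub_iff.2 hfix⟩

theorem IsSelfAdjoint.of_one_sub_sq_eq [StarRing A] [NormedStarGroup A] {x y : A}
    (hx : IsSelfAdjoint x) (hy : ‖y‖ < 1) (h : (1 - y) ^ 2 = 1 - x) : IsSelfAdjoint y := by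
  refine eq_of_one_sub_sq_eq_one_sub_sq (by rwa [norm_star]) hy ?_
  rw [h, ← hx.star_eq, ← star_one, ← star_sub, ← star_sub, ← star_pow, h]

end BanachAlgebra

section StarRing

variable {R : Type*} [Ring R] {P : Rˣ} {T : R}

theorem Units.inv_mul_mul_inv_mul_eq_neg_one (hPT : Commute (P : R) T)
    (hPP : (P : R) * P = -(T * T)) :
    (↑P⁻¹ * T) * (↑P⁻¹ * T) = -1 := by
  rw [← neg_eq_iff_eq_neg, eq_comm] at hPP
  calc ↑P⁻¹ * T * (↑P⁻¹ * T) = ↑P⁻¹ * (↑P⁻¹ * (T * T)) := by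
        rw [mul_assoc, ← mul_assoc T, ← hPT.units_inv_left.eq, mul_assoc]
    _ = -1 := by rw [hPP, mul_neg, Units.inv_mul_cancel_left, mul_neg, Units.inv_mul]

theorem Units.star_inv_mul_mul_mul_inv_mul_eq_self [StarRing R] (hP : IsSelfAdjoint (P : R))
    (hPT : Commute (P : R) T) (hT : star T = -T) (hPP : (P : R) * P = -(T * T)) :
    star (↑P⁻¹ * T) * P * (↑P⁻¹ * T) = P := by
  have hP' : star (↑P⁻¹ : R) = ↑P⁻¹ := by
    rw [← Units.coe_star_inv, show star P = P from Units.ext hP]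
  calc star (↑P⁻¹ * T) * P * (↑P⁻¹ * T) = -(T * (↑P⁻¹ * P * ↑P⁻¹) * T) := by
        rw [star_mul, hT, hP']; noncomm_ring
    _ = -(↑P⁻¹ * (T * T)) := by
        rw [Units.inv_mul, one_mul, ← hPT.units_inv_left.eq, mul_assoc]
    _ = P := by rw [← mul_neg, ← hPP, Units.inv_mul_cancel_left]

end StarRing

open RealInnerProductSpace

section HilbertSpace

variable {S : Type*} [NormedAddCommGroup S] [InnerProductSpace ℝ S]

namespace ContinuousLinearMap

theorem inner_apply_self_le_norm_mul_sq (A : S →L[ℝ] S) (u : S) : ⟪A u, u⟫ ≤ ‖A‖ * ‖u‖ ^ 2 :=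
  calc ⟪A u, u⟫ ≤ ‖A u‖ * ‖u‖ := real_inner_le_norm _ _
    _ ≤ ‖A‖ * ‖u‖ * ‖u‖ := by gcongr; exact A.le_opNorm u
    _ = ‖A‖ * ‖u‖ ^ 2 := by ring

theorem norm_le_of_abs_inner_self_le {x : S →L[ℝ] S}
    (hx : (x : S →ₗ[ℝ] S).IsSymmetric) {r : ℝ} (hr : 0 ≤ r) (h : ∀ u, |⟪x u, u⟫| ≤ r * ‖u‖ ^ 2) :
    ‖x‖ ≤ r := by
  rw [x.norm_eq_iSup_rayleighQuotient hx]
  refine ciSup_le fun u ↦ ?_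
  rcases eq_or_ne u 0 with rfl | hu
  · simpa using hr
  rw [rayleighQuotient, reApplyInnerSelf_apply, abs_div, abs_sq, div_le_iff₀ (by positivity)]
  exact h u

theorem star_eq_neg_of_inner_map_skew [CompleteSpace S] {T : S →L[ℝ] S}
    (h : ∀ u v, ⟪T u, v⟫ = -⟪T v, u⟫) : star T = -T := by
  rw [star_eq_adjoint, eq_comm, eq_adjoint_iff]
  intro u v
  rw [neg_apply, inner_neg_left, h, neg_neg, real_inner_comm]

theorem exists_sqrt_of_coercive [CompleteSpace S] {A : S →L[ℝ] S}
    (hA : IsSelfAdjoint A) {c : ℝ} (hc : 0 < c) (hcA : ∀ u, c * ‖u‖ ^ 2 ≤ ⟪A u, u⟫) :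
    ∃ P : S →L[ℝ] S, IsSelfAdjoint P ∧ P * P = A ∧ (∀ T, Commute T A → Commute T P) ∧
      ∃ c' > 0, ∀ u, c' * ‖u‖ ^ 2 ≤ ⟪P u, u⟫ := by
  set C := ‖A‖ + c
  have hC : 0 < C := by positivity
  set r := 1 - c / C
  have hr0 : 0 ≤ r := by
    simp only [r, sub_nonneg, div_le_one hC, C, le_add_iff_nonneg_left, norm_nonneg]
  have hr1 : r < 1 := by simp only [r]; linarith [div_pos hc hC]
  set x : S →L[ℝ] S := 1 - C⁻¹ • A
  have hxsa : IsSelfAdjoint x := (IsSelfAdjoint.one _).sub ((IsSelfAdjoint.all _).smul hA)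
  -- `c ≤ A ≤ C` gives `0 ≤ x ≤ 1 - c / C`.
  have hx : ‖x‖ ≤ r := by
    refine norm_le_of_abs_inner_self_le hxsa.isSymmetric hr0 fun u ↦ abs_le.2 ⟨?_, ?_⟩ <;>
      simp only [x, sub_apply, one_apply_eq_self, smul_apply, inner_sub_left, real_inner_smul_left,
        real_inner_self_eq_norm_sq]
    · have : C⁻¹ * ⟪A u, u⟫ ≤ C⁻¹ * (C * ‖u‖ ^ 2) := by
        gcongr; exact (A.inner_apply_self_le_norm_mul_sq u).trans (by gcongr; simp [C, hc.le])
      rw [inv_mul_cancel_left₀ hC.ne'] at this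
      nlinarith [sq_nonneg ‖u‖]
    · have : C⁻¹ * (c * ‖u‖ ^ 2) ≤ C⁻¹ * ⟪A u, u⟫ := by gcongr; exact hcA u
      linarith [show r * ‖u‖ ^ 2 = ‖u‖ ^ 2 - C⁻¹ * (c * ‖u‖ ^ 2) by ring]
  obtain ⟨y, hy_mem, hyr, hy_sq⟩ := exists_mem_elemental_one_sub_sq_eq hx hr1
  refine ⟨√C • (1 - y), ?_, ?_, fun T hTA ↦ ?_, √C * (1 - r),
    mul_pos (Real.sqrt_pos.2 hC) (by linarith), fun u ↦ ?_⟩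
  · exact (IsSelfAdjoint.all _).smul ((IsSelfAdjoint.one _).sub
      (hxsa.of_one_sub_sq_eq (hyr.trans_lt hr1) hy_sq))
  · rw [smul_mul_smul_comm, ← sq, ← sq, hy_sq, Real.sq_sqrt hC.le, sub_sub_cancel,
      smul_inv_smul₀ hC.ne']
  · have hTx : T ∈ Subalgebra.centralizer ℝ {x} := by
      simpa [Subalgebra.mem_centralizer_iff] using
        ((Commute.one_right T).sub_right (hTA.smul_right C⁻¹)).eq.symm
    exact (((Commute.one_right T).sub_right
      (Algebra.elemental.le_centralizer_centralizer ℝ x hy_mem T hTx)).smul_right _)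
  · have hyu : ⟪y u, u⟫ ≤ r * ‖u‖ ^ 2 :=
      (y.inner_apply_self_le_norm_mul_sq u).trans (by gcongr)
    simp only [smul_apply, sub_apply, one_apply_eq_self, real_inner_smul_left, inner_sub_left,
      real_inner_self_eq_norm_sq]
    rw [mul_assoc]
    gcongr
    linarith

end ContinuousLinearMap

namespace ContinuousLinearEquiv

variable [CompleteSpace S] (T : S ≃L[ℝ] S)

theorem exists_pos_mul_sq_le_inner_star_mul_self :
    ∃ c > 0, ∀ u, c * ‖u‖ ^ 2 ≤ ⟪(star (T : S →L[ℝ] S) * (T : S →L[ℝ] S)) u, u⟫ := by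
  set m := ‖(T.symm : S →L[ℝ] S)‖ + 1
  have hm : 0 < m := by positivity
  refine ⟨(m ^ 2)⁻¹, by positivity, fun u ↦ ?_⟩
  rw [mul_apply_eq_comp, ContinuousLinearMap.star_eq_adjoint,
    ContinuousLinearMap.adjoint_inner_left, real_inner_self_eq_norm_sq,
    inv_mul_le_iff₀ (by positivity), ← mul_pow]
  have : ‖u‖ ≤ m * ‖(T : S →L[ℝ] S) u‖ :=
    calc ‖u‖ = ‖(T.symm : S →L[ℝ] S) (T u)‖ := by simp
      _ ≤ ‖(T.symm : S →L[ℝ] S)‖ * ‖T u‖ := ContinuousLinearMap.le_opNorm _ _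
      _ ≤ m * ‖T u‖ := by gcongr; simp [m]
  gcongr

theorem exists_abs_of_star_eq_neg (hT : star (T : S →L[ℝ] S) = -T) :
    ∃ P : (S →L[ℝ] S)ˣ, IsSelfAdjoint (P : S →L[ℝ] S) ∧ Commute (P : S →L[ℝ] S) T ∧
      (P : S →L[ℝ] S) * P = -(T * T : S →L[ℝ] S) ∧
      ∃ c > 0, ∀ u, c * ‖u‖ ^ 2 ≤ ⟪(P : S →L[ℝ] S) u, u⟫ := by
  obtain ⟨c, hc, hcT⟩ := T.exists_pos_mul_sq_le_inner_star_mul_self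
  obtain ⟨P, hPsa, hPP, hPcomm, c', hc', hcP⟩ :=
    ContinuousLinearMap.exists_sqrt_of_coercive (IsSelfAdjoint.star_mul_self _) hc hcT
  rw [hT, neg_mul] at hPP hPcomm
  obtain ⟨P, rfl⟩ : IsUnit P :=
    ContinuousLinearMap.isUnit_of_forall_le_norm_inner_map P (c := ⟨c', hc'.le⟩) hc'
      fun u ↦ by rw [mul_comm, Real.norm_eq_abs]; exact (hcP u).trans (le_abs_self _)
  exact ⟨P, hPsa, (hPcomm _ ((Commute.refl _).mul_right (Commute.refl _)).neg_right).symm, hPP,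
    c', hc', hcP⟩

end ContinuousLinearEquiv

end HilbertSpace

/-- A Hilbert space with a bounded symplectic form represented by a topological
isomorphism can be renormed (with an equivalent inner product) so as to become a
symplectic Hilbert space: there is an equivalent inner product `p` and a
`p`-isometric complex structure `J` with `ω u v = p (J u) v`. -/
theorem statement0 {S : Type*} [NormedAddCommGroup S] [InnerProductSpace ℝ S] [CompleteSpace S]
    (T : S ≃L[ℝ] S) (ω : S → S → ℝ)
    (hωT : ∀ u v : S, ω u v = ⟪T u, v⟫)
    (hskew : ∀ u v : S, ω u v = -ω v u) :
    ∃ (p : S → S → ℝ) (J : S →ₗ[ℝ] S),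
      (∀ u v : S, p u v = p v u) ∧
      (∀ u v w : S, p (u + v) w = p u w + p v w) ∧
      (∀ (a : ℝ) (u v : S), p (a • u) v = a * p u v) ∧
      (∃ c C : ℝ, 0 < c ∧ 0 < C ∧ ∀ u : S, c * ‖u‖ ^ 2 ≤ p u u ∧ p u u ≤ C * ‖u‖ ^ 2) ∧
      (∀ u v : S, p (J u) (J v) = p u v) ∧
      (∀ u : S, J (J u) = -u) ∧
      (∀ u v : S, ω u v = p (J u) v) := by
  set T' : S →L[ℝ] S := T.toContinuousLinearMap
  have hT' : star T' = -T' :=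
    T'.star_eq_neg_of_inner_map_skew fun u v ↦
      (hωT u v).symm.trans ((hskew u v).trans (congrArg Neg.neg (hωT v u)))
  obtain ⟨P, hPsa, hPT, hPP, c, hc, hcP⟩ := T.exists_abs_of_star_eq_neg hT'
  set J : S →L[ℝ] S := ↑P⁻¹ * T'
  refine ⟨fun u v ↦ ⟪(P : S →L[ℝ] S) u, v⟫, J, fun u v ↦ ?_, fun u v w ↦ ?_, fun a u v ↦ ?_,
    ⟨c, ‖(P : S →L[ℝ] S)‖ + 1, hc, by positivity, fun u ↦ ⟨hcP u, ?_⟩⟩, fun u v ↦ ?_,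
    fun u ↦ ?_, fun u v ↦ ?_⟩
  · exact (hPsa.isSymmetric u v).trans (real_inner_comm _ _)
  · simp only [map_add, inner_add_left]
  · simp only [map_smul, real_inner_smul_left]
  · exact (ContinuousLinearMap.inner_apply_self_le_norm_mul_sq _ u).trans (by gcongr; linarith)
  · calc ⟪(P : S →L[ℝ] S) (J u), J v⟫ = ⟪(star J * P * J) u, v⟫ := by
          rw [ContinuousLinearMap.star_eq_adjoint]
          exact (ContinuousLinearMap.adjoint_inner_left _ _ _).symm
      _ = ⟪(P : S →L[ℝ] S) u, v⟫ := by
          rw [Units.star_inv_mul_mul_mul_inv_mul_eq_self hPsa hPT hT' hPP]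
  · change (J * J) u = -u
    rw [Units.inv_mul_mul_inv_mul_eq_neg_one hPT hPP, neg_apply, one_apply_eq_self]
  · rw [hωT]
    change ⟪T' u, v⟫ = ⟪((P : S →L[ℝ] S) * J) u, v⟫
    rw [Units.mul_inv_cancel_left]
end

section
/- Let H be a real Hilbert space and let L be a Lagrangian subspace of S(H) = H × H such that L ∩ ({0} × H) = {0} and L + ({0} × H) is closed. Then L is the graph of a bounded self-adjoint operator T : H → H. -/
/-!
The condition `L ∩ ({0} × H) = {0}` says that `L` is the graph of a linear operator `T`
defined on `D = fst L`. Since `L` is coisotropic, a vector `a` orthogonal to `D` gives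
`(0, a) ∈ L`, hence `a = 0`: the domain `D` is dense. But `L + ({0} × H) = D × H`, so its
closedness makes `D` closed, whence `D = H`. The projection `L → H` is then a continuous
bijection from a Banach space, so by the open mapping theorem `T` is bounded; isotropy of
`L` is exactly the symmetry of `T`.
-/

open RealInnerProductSpace

namespace Submodule

section Module

variable {R M N : Type*} [Ring R] [AddCommGroup M] [Module R M] [AddCommGroup N] [Module R N]

theorem inf_bot_prod_top_eq_bot_iff (L : Submodule R (M × N)) :
    L ⊓ (⊥ : Submodule R M).prod ⊤ = ⊥ ↔ ∀ x ∈ L, x.1 = 0 → x.2 = 0 := by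
  simp only [eq_bot_iff, SetLike.le_def, mem_inf, mem_prod, mem_bot, mem_top, and_true,
    and_imp, Prod.ext_iff, Prod.fst_zero, Prod.snd_zero]
  exact forall₂_congr fun x _ => ⟨fun h h1 => (h h1).2, fun h h1 => ⟨h1, h h1⟩⟩

theorem sup_bot_prod_top (L : Submodule R (M × N)) :
    L ⊔ (⊥ : Submodule R M).prod ⊤ = (L.map (LinearMap.fst R M N)).prod ⊤ := by
  ext ⟨x, y⟩
  simp only [mem_sup, mem_prod, mem_bot, mem_top, and_true, mem_map, LinearMap.fst_apply]
  constructor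
  · rintro ⟨p, hp, q, hq, hpq⟩
    refine ⟨p, hp, ?_⟩
    simpa [hq] using congrArg Prod.fst hpq
  · rintro ⟨p, hp, rfl⟩
    exact ⟨p, hp, (0, y - p.2), rfl, Prod.ext (add_zero _) (add_sub_cancel _ _)⟩

theorem map_fst_eq_top_of_isClosed_sup_bot_prod_top [TopologicalSpace M] [TopologicalSpace N]
    {L : Submodule R (M × N)}
    (hsum : IsClosed ((L ⊔ (⊥ : Submodule R M).prod ⊤ : Submodule R (M × N)) : Set (M × N)))
    (hdense : Dense (L.map (LinearMap.fst R M N) : Set M)) :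
    L.map (LinearMap.fst R M N) = ⊤ := by
  have hclosed : IsClosed (L.map (LinearMap.fst R M N) : Set M) := by
    rw [sup_bot_prod_top] at hsum
    simpa using hsum.preimage (Continuous.prodMk_left (0 : N))
  refine eq_top_iff'.2 fun x => ?_
  rw [← SetLike.mem_coe, ← hclosed.closure_eq, hdense.closure_eq]
  exact Set.mem_univ x

end Module

theorem exists_continuousLinearMap_eq_graph {𝕜 E F : Type*} [NontriviallyNormedField 𝕜]
    [NormedAddCommGroup E] [NormedSpace 𝕜 E] [CompleteSpace E]
    [NormedAddCommGroup F] [NormedSpace 𝕜 F] [CompleteSpace F]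
    (L : Submodule 𝕜 (E × F)) (hclosed : IsClosed (L : Set (E × F)))
    (hgraph : ∀ x ∈ L, x.1 = 0 → x.2 = 0) (hdom : L.map (LinearMap.fst 𝕜 E F) = ⊤) :
    ∃ T : E →L[𝕜] F, (L : Set (E × F)) = {p | T p.1 = p.2} := by
  have := hclosed.completeSpace_coe
  let π : L →L[𝕜] E := (ContinuousLinearMap.fst 𝕜 E F).comp L.subtypeL
  have hker : π.ker = ⊥ := by
    rw [eq_bot_iff]
    rintro ⟨p, hp⟩ (h : p.1 = 0)
    simpa [Prod.ext_iff] using And.intro h (hgraph p hp h)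
  have hrange : π.range = ⊤ := by
    rw [← hdom]
    ext x
    simp [π]
  let e := ContinuousLinearEquiv.ofBijective π hker hrange
  let T : E →L[𝕜] F :=
    (ContinuousLinearMap.snd 𝕜 E F).comp (L.subtypeL.comp (e.symm : E →L[𝕜] L))
  have hmem : ∀ x, (x, T x) ∈ L := fun x => by
    have h : ((e.symm x : L) : E × F) = (x, T x) := Prod.ext (e.apply_symm_apply x) rfl
    exact h ▸ (e.symm x).2
  refine ⟨T, Set.ext fun p => ⟨fun hp => ?_, fun hp => ?_⟩⟩
  · have := hgraph _ (L.sub_mem hp (hmem p.1)) (sub_self p.1)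
    exact (sub_eq_zero.mp this).symm
  · rw [SetLike.mem_coe, ← Prod.mk.eta (p := p), ← show T p.1 = p.2 from hp]
    exact hmem p.1

end Submodule

theorem orthogonal_map_fst_eq_bot_of_coisotropic {H : Type*} [NormedAddCommGroup H]
    [InnerProductSpace ℝ H]
    (L : Submodule ℝ (H × H))
    (hcoiso : ∀ q : H × H, (∀ p ∈ L, (⟪q.2, p.1⟫ - ⟪q.1, p.2⟫ : ℝ) = 0) → q ∈ L)
    (hgraph : ∀ x ∈ L, x.1 = 0 → x.2 = 0) :
    (L.map (LinearMap.fst ℝ H H))ᗮ = ⊥ := by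
  refine (Submodule.eq_bot_iff _).2 fun a ha => ?_
  have hperp : ∀ p ∈ L, ⟪a, p.1⟫ = 0 := fun p hp =>
    Submodule.inner_left_of_mem_orthogonal (Submodule.mem_map_of_mem hp) ha
  exact hgraph (0, a) (hcoiso (0, a) fun p hp => by simp [hperp p hp]) rfl

/-- A Lagrangian subspace `L` of `S(H) = H × H` with `L ∩ ({0} × H) = {0}` and
`L + ({0} × H)` closed is the graph of a bounded self-adjoint operator. -/
theorem statement6 {H : Type*} [NormedAddCommGroup H] [InnerProductSpace ℝ H] [CompleteSpace H]
    (L : Submodule ℝ (H × H))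
    (hclosed : IsClosed (L : Set (H × H)))
    (hLag : (L : Set (H × H)) =
      {q | ∀ p ∈ L, (⟪q.2, p.1⟫ - ⟪q.1, p.2⟫ : ℝ) = 0})
    (htrans : L ⊓ (⊥ : Submodule ℝ H).prod ⊤ = ⊥)
    (hsum : IsClosed ((L ⊔ (⊥ : Submodule ℝ H).prod ⊤ : Submodule ℝ (H × H)) : Set (H × H))) :
    ∃ T : H →L[ℝ] H, (∀ x y : H, ⟪T x, y⟫ = ⟪x, T y⟫) ∧
      (L : Set (H × H)) = {p : H × H | T p.1 = p.2} := by
  have hmem_iff : ∀ q, q ∈ L ↔ ∀ p ∈ L, (⟪q.2, p.1⟫ - ⟪q.1, p.2⟫ : ℝ) = 0 := Set.ext_iff.1 hLag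
  have hgraph := (Submodule.inf_bot_prod_top_eq_bot_iff L).1 htrans
  have hdense : Dense (L.map (LinearMap.fst ℝ H H) : Set H) :=
    Submodule.dense_iff_topologicalClosure_eq_top.2 <| Submodule.topologicalClosure_eq_top_iff.2 <|
      orthogonal_map_fst_eq_bot_of_coisotropic L (fun q => (hmem_iff q).2) hgraph
  obtain ⟨T, hT⟩ := Submodule.exists_continuousLinearMap_eq_graph L hclosed hgraph
    (Submodule.map_fst_eq_top_of_isClosed_sup_bot_prod_top hsum hdense)
  have hmem : ∀ x, (x, T x) ∈ L := fun x => by rw [← SetLike.mem_coe, hT]; rfl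
  refine ⟨T, fun x y => ?_, hT⟩
  have := (hmem_iff (x, T x)).1 (hmem x) (y, T y) (hmem y)
  dsimp only at this
  linarith [real_inner_comm x (T y)]
end

section
/- Let H be a real Hilbert space and L a Lagrangian subspace of S(H) = H × H with L ∩ ({0} × H) = {0}. Then L is the graph of a (possibly unbounded) self-adjoint operator T : D ⊆ H → H with dense domain D = {u ∈ H : (u,v) ∈ L for some v}. -/
open RealInnerProductSpace

/-- A Lagrangian subspace `L` of `S(H) = H × H` with `L ∩ ({0} × H) = {0}` is the
graph of a densely defined (possibly unbounded) self-adjoint operator. -/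
theorem statement7 {H : Type*} [NormedAddCommGroup H] [InnerProductSpace ℝ H] [CompleteSpace H]
    (L : Submodule ℝ (H × H))
    (hclosed : IsClosed (L : Set (H × H)))
    (hLag : (L : Set (H × H)) =
      {q | ∀ p ∈ L, (⟪q.2, p.1⟫ - ⟪q.1, p.2⟫ : ℝ) = 0})
    (htrans : L ⊓ (⊥ : Submodule ℝ H).prod ⊤ = ⊥) :
    ∃ T : H →ₗ.[ℝ] H, T.graph = L ∧ T.domain = {u : H | ∃ v : H, (u, v) ∈ L} ∧
      Dense (T.domain : Set H) ∧ T.adjoint = T := by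
  -- the key nondegeneracy fact coming from `htrans`
  have hker : ∀ {w : H}, (0, w) ∈ L → w = 0 := by
    intro w hw
    have : ((0 : H), w) ∈ L ⊓ (⊥ : Submodule ℝ H).prod ⊤ := by
      refine ⟨hw, ?_⟩
      exact Submodule.mem_prod.2 ⟨rfl, trivial⟩
    rw [htrans] at this
    exact congrArg Prod.snd this
  have hg : ∀ (x : H × H) (_hx : x ∈ L) (_hx' : x.fst = 0), x.snd = 0 := by
    rintro ⟨u, v⟩ hx hx'
    simp only at hx' ⊢
    subst hx'
    exact hker hx
  set T := L.toLinearPMap with hT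
  have hgraph : T.graph = L := L.toLinearPMap_graph_eq hg
  have hdom : (T.domain : Set H) = {u : H | ∃ v : H, (u, v) ∈ L} := by
    ext u
    simp only [hT, Submodule.toLinearPMap_domain, Submodule.mem_map, SetLike.mem_coe,
      Set.mem_setOf_eq]
    constructor
    · rintro ⟨⟨a, b⟩, hab, rfl⟩
      exact ⟨b, hab⟩
    · rintro ⟨v, hv⟩
      exact ⟨(u, v), hv, rfl⟩
  -- density
  have hdense : Dense (T.domain : Set H) := by
    rw [Submodule.dense_iff_topologicalClosure_eq_top,
      Submodule.topologicalClosure_eq_top_iff]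
    rw [Submodule.eq_bot_iff]
    intro w hw
    have hmem : ((0 : H), w) ∈ L := by
      rw [show ((0:H), w) ∈ L ↔ ((0:H), w) ∈ (L : Set (H × H)) from Iff.rfl, hLag]
      intro p hp
      have hp1 : p.1 ∈ T.domain := by
        rw [← SetLike.mem_coe, hdom]
        exact ⟨p.2, hp⟩
      have := hw p.1 hp1
      simp only [inner_zero_left, sub_zero]
      rw [real_inner_comm]
      exact this
    exact hker hmem
  -- membership in L from the "formal adjoint" inner-product condition
  have hmemL : ∀ y z : H, (∀ x : T.domain, (⟪z, (x : H)⟫ : ℝ) = ⟪y, T x⟫) → (y, z) ∈ L := by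
    intro y z h
    rw [show (y, z) ∈ L ↔ (y, z) ∈ (L : Set (H × H)) from Iff.rfl, hLag]
    intro p hp
    rw [← hgraph, LinearPMap.mem_graph_iff] at hp
    obtain ⟨x, hx1, hx2⟩ := hp
    have := h x
    rw [← hx1, ← hx2]
    rw [this]
    ring
  -- T is a formal adjoint of itself
  have hsym : T.IsFormalAdjoint T := by
    intro x y
    have hx : ((x : H), T x) ∈ L := by
      rw [← hgraph]
      exact T.mem_graph x
    have hy : ((y : H), T y) ∈ L := by
      rw [← hgraph]
      exact T.mem_graph y
    have := (hLag ▸ hx : ((x : H), T x) ∈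
      {q : H × H | ∀ p ∈ L, (⟪q.2, p.1⟫ - ⟪q.1, p.2⟫ : ℝ) = 0}) _ hy
    simp only at this
    linarith [this]
  refine ⟨T, hgraph, hdom, hdense, ?_⟩
  -- self-adjointness
  have hle : T ≤ T.adjoint := hsym.le_adjoint hdense
  have hge : T.adjoint ≤ T := by
    apply LinearPMap.le_of_le_graph
    intro q hq
    rw [LinearPMap.mem_graph_iff] at hq
    obtain ⟨x, hx1, hx2⟩ := hq
    have hfa := LinearPMap.adjoint_isFormalAdjoint hdense (T := T)
    have hmem : (q.1, q.2) ∈ L := by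
      apply hmemL
      intro x'
      have := hfa x x'
      rw [hx1, hx2] at this
      exact this
    rw [hgraph]
    simpa using hmem
  exact LinearPMap.eq_of_eq_graph (le_antisymm (LinearPMap.le_graph_of_le hge)
    (LinearPMap.le_graph_of_le hle))
end

section
/- Let H be a Hilbert space and V, W closed subspaces. The pair (V, W) is a Fredholm pair (i.e., V + W is closed, dim(V ∩ W) < ∞, and codim(V + W) < ∞) if and only if the restriction to V of the orthogonal projection onto W^⊥ is a Fredholm operator; moreover, in that case ind(V,W) := dim(V∩W) - codim(V+W) equals the Fredholm index of P_{W^⊥}|_V. -/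
/-!
Write `P = π_{Wᗮ} ∘ ι_V`. Since `π_{Wᗮ} v = v - π_W v`, the kernel of `P` is `V ∩ W` and its
range is `(V + W) ∩ Wᗮ`. As `V + W` contains `W`, it equals the preimage of `(V + W) ∩ Wᗮ`
under `π_{Wᗮ}`, so `V + W` is closed exactly when the range of `P` is; and since `E = W + Wᗮ`,
the map `Wᗮ → E ⧸ (V + W)` is onto with kernel `(V + W) ∩ Wᗮ`, so the cokernel of `P` is
`E ⧸ (V + W)`. Thus the pair and `P` have the same kernel and cokernel, hence the same index.
-/

namespace Submodule

section Quotient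

variable {R M : Type*} [Ring R] [AddCommGroup M] [Module R M]

theorem surjective_mkQ_comp_subtype_of_sup_eq_top {A S : Submodule R M} (h : A ⊔ S = ⊤) :
    Function.Surjective (S.mkQ ∘ₗ A.subtype) := by
  rintro ⟨m⟩
  obtain ⟨a, ha, s, hs, rfl⟩ := mem_sup.mp (h ▸ mem_top : m ∈ A ⊔ S)
  refine ⟨⟨a, ha⟩, (Quotient.eq S).mpr ?_⟩
  simpa using neg_mem hs

noncomputable def quotientComapSubtypeEquivOfSupEqTop {A S : Submodule R M} (h : A ⊔ S = ⊤) :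
    (A ⧸ S.comap A.subtype) ≃ₗ[R] M ⧸ S :=
  quotEquivOfEq _ _ (by rw [LinearMap.ker_comp, ker_mkQ]) ≪≫ₗ
    (S.mkQ ∘ₗ A.subtype).quotKerEquivOfSurjective (surjective_mkQ_comp_subtype_of_sup_eq_top h)

end Quotient

variable {𝕜 E : Type*} [RCLike 𝕜] [NormedAddCommGroup E] [InnerProductSpace 𝕜 E]
  (V W : Submodule 𝕜 E) [W.HasOrthogonalProjection]

theorem ker_orthogonalProjectionOnto_orthogonal_comp_subtype :
    LinearMap.ker ((Wᗮ.orthogonalProjectionOnto : E →ₗ[𝕜] Wᗮ) ∘ₗ V.subtype) =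
      (V ⊓ W).comap V.subtype := by
  ext v
  simp [orthogonal_orthogonal]

theorem range_orthogonalProjectionOnto_orthogonal_comp_subtype :
    LinearMap.range ((Wᗮ.orthogonalProjectionOnto : E →ₗ[𝕜] Wᗮ) ∘ₗ V.subtype) =
      (V ⊔ W).comap Wᗮ.subtype := by
  ext x
  simp only [LinearMap.mem_range, LinearMap.coe_comp, Function.comp_apply, coe_subtype,
    ContinuousLinearMap.coe_coe, mem_comap]
  constructor
  · rintro ⟨v, rfl⟩
    rw [← starProjection_apply, starProjection_orthogonal_val]
    exact sub_mem (mem_sup_left v.2) (mem_sup_right (W.orthogonalProjectionOnto (v : E)).2)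
  · intro hx
    obtain ⟨v, hv, w, hw, hvw⟩ := mem_sup.mp hx
    refine ⟨⟨v, hv⟩, ?_⟩
    have hw0 : Wᗮ.orthogonalProjectionOnto w = 0 :=
      orthogonalProjectionOnto_eq_zero_iff.mpr (W.le_orthogonal_orthogonal hw)
    rw [coe_mk, eq_sub_of_add_eq hvw, map_sub, hw0, sub_zero,
      orthogonalProjectionOnto_mem_subspace_eq_self]

theorem comap_orthogonalProjectionOnto_comap_subtype_orthogonal {S : Submodule 𝕜 E}
    (hWS : W ≤ S) :
    (S.comap Wᗮ.subtype).comap (Wᗮ.orthogonalProjectionOnto : E →ₗ[𝕜] Wᗮ) = S := by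
  ext x
  simp only [mem_comap, coe_subtype, ContinuousLinearMap.coe_coe, ← starProjection_apply,
    starProjection_orthogonal_val]
  exact sub_mem_iff_left _ (hWS (W.orthogonalProjectionOnto x).2)

theorem isClosed_comap_subtype_orthogonal_iff {S : Submodule 𝕜 E} (hWS : W ≤ S) :
    IsClosed (S.comap Wᗮ.subtype : Set Wᗮ) ↔ IsClosed (S : Set E) := by
  refine ⟨fun h ↦ ?_, fun h ↦ h.preimage continuous_subtype_val⟩
  rw [← comap_orthogonalProjectionOnto_comap_subtype_orthogonal W hWS]
  exact h.preimage (Wᗮ.orthogonalProjectionOnto).continuous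

end Submodule

theorem statement8_general {H : Type*} [NormedAddCommGroup H] [InnerProductSpace ℝ H] [CompleteSpace H]
    (V W : Submodule ℝ H) (hW : IsClosed (W : Set H)) :
    let P : ↥V →ₗ[ℝ] ↥Wᗮ := (Submodule.orthogonalProjectionOnto Wᗮ).toLinearMap.comp V.subtype
    ((IsClosed ((V ⊔ W : Submodule ℝ H) : Set H) ∧
        FiniteDimensional ℝ ↥(V ⊓ W) ∧ FiniteDimensional ℝ (H ⧸ (V ⊔ W))) ↔
      (FiniteDimensional ℝ ↥(LinearMap.ker P) ∧
        IsClosed ((LinearMap.range P : Submodule ℝ ↥Wᗮ) : Set ↥Wᗮ) ∧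
        FiniteDimensional ℝ (↥Wᗮ ⧸ LinearMap.range P))) ∧
    ((IsClosed ((V ⊔ W : Submodule ℝ H) : Set H) ∧
        FiniteDimensional ℝ ↥(V ⊓ W) ∧ FiniteDimensional ℝ (H ⧸ (V ⊔ W))) →
      (Module.finrank ℝ ↥(V ⊓ W) : ℤ) - Module.finrank ℝ (H ⧸ (V ⊔ W)) =
        (Module.finrank ℝ ↥(LinearMap.ker P) : ℤ) -
          Module.finrank ℝ (↥Wᗮ ⧸ LinearMap.range P)) := by
  intro P
  have : CompleteSpace W := hW.completeSpace_coe
  have hWVW : W ≤ V ⊔ W := le_sup_right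
  have eKer : LinearMap.ker P ≃ₗ[ℝ] ↥(V ⊓ W) :=
    (LinearEquiv.ofEq _ _ (V.ker_orthogonalProjectionOnto_orthogonal_comp_subtype W)).trans
      (Submodule.comapSubtypeEquivOfLe inf_le_left)
  have hRange : LinearMap.range P = (V ⊔ W).comap Wᗮ.subtype :=
    V.range_orthogonalProjectionOnto_orthogonal_comp_subtype W
  have eCoker : (Wᗮ ⧸ LinearMap.range P) ≃ₗ[ℝ] H ⧸ (V ⊔ W) := hRange ▸
    Submodule.quotientComapSubtypeEquivOfSupEqTop
      (eq_top_mono (sup_le_sup_left hWVW _)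
        (sup_comm W Wᗮ ▸ W.sup_orthogonal_of_hasOrthogonalProjection))
  have hClosed :
      IsClosed (LinearMap.range P : Set Wᗮ) ↔ IsClosed ((V ⊔ W : Submodule ℝ H) : Set H) :=
    hRange ▸ W.isClosed_comap_subtype_orthogonal_iff hWVW
  refine ⟨⟨fun ⟨hVW, _, _⟩ ↦ ?_, fun ⟨_, hP, _⟩ ↦ ?_⟩, fun _ ↦ ?_⟩
  · exact ⟨eKer.symm.finiteDimensional, hClosed.mpr hVW, eCoker.symm.finiteDimensional⟩
  · exact ⟨hClosed.mp hP, eKer.finiteDimensional, eCoker.finiteDimensional⟩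
  · rw [eKer.finrank_eq, eCoker.finrank_eq]

/-- Fredholm pairs via projections: `(V, W)` is a Fredholm pair if and only if the
restriction to `V` of the orthogonal projection onto `W^⊥` is Fredholm, and in that
case the index of the pair equals the Fredholm index of the projection. -/
theorem statement8 {H : Type*} [NormedAddCommGroup H] [InnerProductSpace ℝ H] [CompleteSpace H]
    (V W : Submodule ℝ H) (hV : IsClosed (V : Set H)) (hW : IsClosed (W : Set H)) :
    let P : ↥V →ₗ[ℝ] ↥Wᗮ := (Submodule.orthogonalProjectionOnto Wᗮ).toLinearMap.comp V.subtype
    ((IsClosed ((V ⊔ W : Submodule ℝ H) : Set H) ∧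
        FiniteDimensional ℝ ↥(V ⊓ W) ∧ FiniteDimensional ℝ (H ⧸ (V ⊔ W))) ↔
      (FiniteDimensional ℝ ↥(LinearMap.ker P) ∧
        IsClosed ((LinearMap.range P : Submodule ℝ ↥Wᗮ) : Set ↥Wᗮ) ∧
        FiniteDimensional ℝ (↥Wᗮ ⧸ LinearMap.range P))) ∧
    ((IsClosed ((V ⊔ W : Submodule ℝ H) : Set H) ∧
        FiniteDimensional ℝ ↥(V ⊓ W) ∧ FiniteDimensional ℝ (H ⧸ (V ⊔ W))) →
      (Module.finrank ℝ ↥(V ⊓ W) : ℤ) - Module.finrank ℝ (H ⧸ (V ⊔ W)) =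
        (Module.finrank ℝ ↥(LinearMap.ker P) : ℤ) -
          Module.finrank ℝ (↥Wᗮ ⧸ LinearMap.range P)) :=
  statement8_general V W hW
end

section
/- Let T : D ⊆ H → H be a closed densely defined Fredholm operator on a Hilbert space H. Then (H × {0}, Graph(T)) is a Fredholm pair of closed subspaces of H × H, and ind T = ind(H × {0}, Graph(T)), where ind(V,W) = dim(V∩W) - codim(V+W). -/
open RealInnerProductSpace

/-- For a closed densely defined Fredholm operator `T` on a Hilbert space `H`, the
pair `(H × {0}, Graph T)` is a Fredholm pair in `H × H` and `ind T` equals the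
index of this pair. -/
theorem statement9 {H : Type*} [NormedAddCommGroup H] [InnerProductSpace ℝ H] [CompleteSpace H]
    (T : H →ₗ.[ℝ] H) (hd : Dense (T.domain : Set H))
    (hclosed : IsClosed (T.graph : Set (H × H)))
    (hker : FiniteDimensional ℝ ↥(LinearMap.ker T.toFun))
    (hrange : IsClosed ((LinearMap.range T.toFun : Submodule ℝ H) : Set H))
    (hcoker : FiniteDimensional ℝ (H ⧸ LinearMap.range T.toFun)) :
    let H₀ : Submodule ℝ (H × H) := (⊤ : Submodule ℝ H).prod ⊥
    IsClosed ((H₀ ⊔ T.graph : Submodule ℝ (H × H)) : Set (H × H)) ∧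
    FiniteDimensional ℝ ↥(H₀ ⊓ T.graph) ∧
    FiniteDimensional ℝ ((H × H) ⧸ (H₀ ⊔ T.graph)) ∧
    (Module.finrank ℝ ↥(LinearMap.ker T.toFun) : ℤ) -
        Module.finrank ℝ (H ⧸ LinearMap.range T.toFun) =
      (Module.finrank ℝ ↥(H₀ ⊓ T.graph) : ℤ) -
        Module.finrank ℝ ((H × H) ⧸ (H₀ ⊔ T.graph)) := by
  intro H₀
  set R := LinearMap.range T.toFun with hR
  -- The sup is ⊤ × R
  have hsup : H₀ ⊔ T.graph = (⊤ : Submodule ℝ H).prod R := by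
    apply le_antisymm
    · apply sup_le
      · rintro ⟨a, b⟩ ⟨-, hb⟩
        simp only [Submodule.mem_bot] at hb
        exact ⟨trivial, hb ▸ R.zero_mem⟩
      · rintro ⟨a, b⟩ hab
        rcases T.mem_graph_iff.mp hab with ⟨y, -, hy2⟩
        refine ⟨trivial, ?_⟩
        exact ⟨y, by rw [LinearPMap.toFun_eq_coe]; exact hy2⟩
    · rintro ⟨a, b⟩ ⟨-, hb⟩
      rcases hb with ⟨y, hy⟩
      refine Submodule.mem_sup.mpr ⟨(a - ↑y, 0), ⟨trivial, rfl⟩, (↑y, b), ?_, by simp⟩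
      exact T.mem_graph_iff.mpr ⟨y, rfl, by rw [← LinearPMap.toFun_eq_coe]; exact hy⟩
  -- closedness
  have hclosed_sup : IsClosed ((H₀ ⊔ T.graph : Submodule ℝ (H × H)) : Set (H × H)) := by
    rw [hsup]
    have : ((⊤ : Submodule ℝ H).prod R : Set (H × H)) = Set.univ ×ˢ (R : Set H) := by
      ext ⟨a, b⟩; simp [Submodule.mem_prod]
    rw [this]
    exact isClosed_univ.prod hrange
  -- the intersection is equivalent to ker T.toFun
  have hmem : ∀ x : LinearMap.ker T.toFun, (((x : T.domain) : H), (0 : H)) ∈ H₀ ⊓ T.graph := by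
    intro x
    refine ⟨⟨trivial, rfl⟩, T.mem_graph_iff.mpr ⟨x, rfl, ?_⟩⟩
    have hx : T.toFun (x : T.domain) = 0 := x.2
    rw [← LinearPMap.toFun_eq_coe]; exact hx
  let g : ↥(LinearMap.ker T.toFun) →ₗ[ℝ] ↥(H₀ ⊓ T.graph) :=
    { toFun := fun x => ⟨(((x : T.domain) : H), 0), hmem x⟩
      map_add' := fun x y => by ext <;> simp
      map_smul' := fun c x => by ext <;> simp }
  have hgbij : Function.Bijective g := by
    constructor
    · intro x y hxy
      simp only [g, LinearMap.coe_mk, AddHom.coe_mk, Subtype.mk_eq_mk, Prod.mk.injEq] at hxy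
      exact Subtype.ext (Subtype.ext hxy.1)
    · rintro ⟨⟨a, b⟩, ⟨-, hb⟩, hg⟩
      simp only [Submodule.mem_bot] at hb
      subst hb
      rcases T.mem_graph_iff.mp hg with ⟨y, hy1, hy2⟩
      refine ⟨⟨y, ?_⟩, ?_⟩
      · exact LinearMap.mem_ker.mpr (by rw [LinearPMap.toFun_eq_coe]; exact hy2)
      · exact Subtype.ext (Prod.ext hy1 rfl)
  have hequiv : Nonempty (↥(LinearMap.ker T.toFun) ≃ₗ[ℝ] ↥(H₀ ⊓ T.graph)) :=
    ⟨LinearEquiv.ofBijective g hgbij⟩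
  obtain ⟨e⟩ := hequiv
  -- the quotient equiv
  have hqequiv : Nonempty (((H × H) ⧸ (H₀ ⊔ T.graph)) ≃ₗ[ℝ] (H ⧸ R)) := by
    rw [hsup]
    let f : (H × H) →ₗ[ℝ] H ⧸ R := R.mkQ ∘ₗ LinearMap.snd ℝ H H
    have hkf : LinearMap.ker f = (⊤ : Submodule ℝ H).prod R := by
      ext ⟨a, b⟩
      simp [f, LinearMap.mem_ker, Submodule.Quotient.mk_eq_zero]
    have hsf : Function.Surjective f := by
      intro y
      obtain ⟨b, rfl⟩ := R.mkQ_surjective y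
      exact ⟨(0, b), rfl⟩
    exact ⟨(Submodule.quotEquivOfEq _ _ hkf.symm).trans (f.quotKerEquivOfSurjective hsf)⟩
  obtain ⟨q⟩ := hqequiv
  refine ⟨hclosed_sup, e.finiteDimensional, q.symm.finiteDimensional, ?_⟩
  rw [e.finrank_eq, q.finrank_eq]
end

section
/- Let S be a symplectic Hilbert space with compatible complex structure J, and let I be a closed isotropic subspace of S. Define the symplectic reduction S_I := I^♯ ∩ I^⊥. Then the orthogonal complement of S_I in S equals I ⊕ JI, and S_I^⊥ = I ⊕ JI is itself a symplectic subspace in which I and JI are transverse Lagrangian subspaces. -/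
open RealInnerProductSpace

variable {S : Type*} [NormedAddCommGroup S] [InnerProductSpace ℝ S] [CompleteSpace S]

/-- The symplectic annihilator of `W` with respect to the symplectic form
`ω u v = ⟪J u, v⟫`. -/
def sympAnn (J : S →ₗ[ℝ] S) (W : Submodule ℝ S) : Submodule ℝ S where
  carrier := {v : S | ∀ u ∈ W, ⟪J u, v⟫ = 0}
  zero_mem' := by intro u _; simp
  add_mem' := by
    intro a b ha hb u hu
    rw [inner_add_right, ha u hu, hb u hu, add_zero]
  smul_mem' := by
    intro c a ha u hu
    rw [real_inner_smul_right, ha u hu, mul_zero]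

/-!
With `ω u v = ⟪J u, v⟫` the symplectic annihilator of `W` is the orthogonal complement of `JW`,
so isotropy of `I` says `I ⟂ JI`. The sum of two orthogonal closed subspaces is again closed
(the sum of the two projections is a projection onto it), hence
`(I^♯ ∩ I^⊥)^⊥ = (JI ⊔ I)^⊥⊥ = I ⊕ JI`.
Since `J² = -1` maps `JI` back to `I`, every remaining claim is an orthogonality statement,
settled by the modular law `(U ⊔ V) ⊓ Vᗮ = U ⊔ (V ⊓ Vᗮ) = U` for `U ⟂ V`.
-/

omit [CompleteSpace S] in
theorem sympAnn_eq_orthogonal_map (J : S →ₗ[ℝ] S) (W : Submodule ℝ S) :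
    sympAnn J W = (W.map J)ᗮ := by
  ext v
  simp only [Submodule.mem_orthogonal, Submodule.mem_map, forall_exists_index, and_imp,
    forall_apply_eq_imp_iff₂]
  rfl

namespace Submodule

section Orthogonal

variable {𝕜 E : Type*} [RCLike 𝕜] [NormedAddCommGroup E] [InnerProductSpace 𝕜 E]
  {U V : Submodule 𝕜 E}

theorem IsOrtho.hasOrthogonalProjection_sup (h : U ⟂ V) [U.HasOrthogonalProjection]
    [V.HasOrthogonalProjection] : (U ⊔ V).HasOrthogonalProjection where
  exists_orthogonal v := by
    obtain ⟨u, hu, hvu⟩ := HasOrthogonalProjection.exists_orthogonal (K := U) v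
    obtain ⟨w, hw, hvw⟩ := HasOrthogonalProjection.exists_orthogonal (K := V) v
    refine ⟨u + w, add_mem_sup hu hw, ?_⟩
    rw [← inf_orthogonal]
    constructor
    · rw [← sub_sub]
      exact sub_mem hvu (isOrtho_iff_le.1 h.symm hw)
    · rw [add_comm, ← sub_sub]
      exact sub_mem hvw (isOrtho_iff_le.1 h hu)

theorem IsOrtho.sup_inf_orthogonal_right (h : U ⟂ V) : (U ⊔ V) ⊓ Vᗮ = U := by
  rw [sup_inf_assoc_of_le V (isOrtho_iff_le.1 h), inf_orthogonal_eq_bot, sup_bot_eq]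

end Orthogonal

section SquareNeg

variable {R M : Type*} [Ring R] [AddCommGroup M] [Module R M] {J : M →ₗ[R] M}

theorem map_eq_comap_of_sq_eq_neg (hJ2 : ∀ u, J (J u) = -u) (W : Submodule R M) :
    W.map J = W.comap J := by
  ext x
  constructor
  · rintro ⟨y, hy, rfl⟩
    simpa [hJ2] using W.neg_mem hy
  · intro hx
    exact ⟨-J x, W.neg_mem hx, by simp [hJ2]⟩

theorem map_map_of_sq_eq_neg (hJ2 : ∀ u, J (J u) = -u) (W : Submodule R M) :
    (W.map J).map J = W := by
  rw [map_eq_comap_of_sq_eq_neg hJ2 W, map_comap_eq_of_surjective]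
  exact fun x ↦ ⟨-J x, by simp [hJ2]⟩

end SquareNeg

end Submodule

/-- For a closed isotropic subspace `I` of a symplectic Hilbert space, the
orthogonal complement of the symplectic reduction `S_I = I^♯ ∩ I^⊥` is `I ⊕ JI`,
which is a symplectic subspace in which `I` and `JI` are transverse Lagrangians. -/
theorem statement11
    (J : S →ₗ[ℝ] S)
    (hiso : ∀ u v : S, ⟪J u, J v⟫ = ⟪u, v⟫)
    (hJ2 : ∀ u : S, J (J u) = -u)
    (I : Submodule ℝ S) (hIc : IsClosed (I : Set S))
    (hIiso : I ≤ sympAnn J I) :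
    (sympAnn J I ⊓ Iᗮ)ᗮ = I ⊔ I.map J ∧
    I ⊓ I.map J = ⊥ ∧
    (I ⊔ I.map J) ⊓ sympAnn J (I ⊔ I.map J) = ⊥ ∧
    I = sympAnn J I ⊓ (I ⊔ I.map J) ∧
    I.map J = sympAnn J (I.map J) ⊓ (I ⊔ I.map J) := by
  have hortho : I ⟂ I.map J := Submodule.isOrtho_iff_le.2 (sympAnn_eq_orthogonal_map J I ▸ hIiso)
  have hJIc : IsClosed (I.map J : Set S) := by
    rw [Submodule.map_eq_comap_of_sq_eq_neg hJ2]
    exact hIc.preimage (J.isometryOfInner hiso).continuous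
  have : CompleteSpace I := hIc.completeSpace_coe
  have : CompleteSpace (I.map J) := hJIc.completeSpace_coe
  have := hortho.hasOrthogonalProjection_sup
  simp only [sympAnn_eq_orthogonal_map, Submodule.map_sup, Submodule.map_map_of_sq_eq_neg hJ2]
  refine ⟨?_, hortho.disjoint.eq_bot, ?_, ?_, ?_⟩
  · rw [Submodule.inf_orthogonal, sup_comm, Submodule.orthogonal_orthogonal]
  · rw [sup_comm (I.map J)]
    exact Submodule.inf_orthogonal_eq_bot _
  · rw [inf_comm, hortho.sup_inf_orthogonal_right]
  · rw [inf_comm, sup_comm, hortho.symm.sup_inf_orthogonal_right]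
end

section
/- Let S be a symplectic Hilbert space, I a closed isotropic subspace, and L a Lagrangian subspace of S having a clean intersection with I (i.e., L ∩ I = {0} and L + I is closed). Let L_I denote the image of L ∩ I^♯ under the orthogonal projection onto S_I = I^♯ ∩ I^⊥. Then L_I = (L + I) ∩ S_I. -/
open RealInnerProductSpace

variable {S : Type*} [NormedAddCommGroup S] [InnerProductSpace ℝ S] [CompleteSpace S]

/-!
Write `S_I = I^♯ ∩ I^⊥`. Since `I ⊆ I^⊥⊥ ⊆ S_I^⊥`, moving a vector of `L + I` by an element of
`I` does not change its projection onto `S_I`, which gives `(L + I) ∩ S_I ⊆ L_I`. Conversely,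
if `v ∈ S_I` is the projection of `u ∈ L ∩ I^♯`, then `u - v` lies in `I^♯ ∩ S_I^⊥`; splitting it
along `I ⊕ I^⊥`, its `I^⊥`-component lies in `I^♯` (because `I ⊆ I^♯`) and hence in `S_I`, while
it also lies in `S_I^⊥`, so it vanishes. Thus `u - v ∈ I` and `v ∈ L + I`.
-/

namespace Submodule

variable {𝕜 E : Type*} [RCLike 𝕜] [NormedAddCommGroup E] [InnerProductSpace 𝕜 E]

theorem le_orthogonal_inf_orthogonal (A K : Submodule 𝕜 E) : K ≤ (A ⊓ Kᗮ)ᗮ :=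
  K.le_orthogonal_orthogonal.trans (orthogonal_le inf_le_right)

theorem inf_orthogonal_inf_orthogonal_le {A K : Submodule 𝕜 E} [K.HasOrthogonalProjection]
    (hKA : K ≤ A) : A ⊓ (A ⊓ Kᗮ)ᗮ ≤ K := by
  rintro w ⟨hwA, hw⟩
  obtain ⟨p, hp, q, hq, rfl⟩ := K.exists_add_mem_mem_orthogonal w
  have hqA : q ∈ A := by simpa using A.sub_mem hwA (hKA hp)
  have hq' : q ∈ (A ⊓ Kᗮ)ᗮ := by
    simpa using (A ⊓ Kᗮ)ᗮ.sub_mem hw (le_orthogonal_inf_orthogonal A K hp)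
  have hq0 : q = 0 := inner_self_eq_zero.mp ((mem_orthogonal' _ _).mp hq' q ⟨hqA, hq⟩)
  simpa [hq0] using hp

end Submodule

theorem statement13_general
    (J : S →ₗ[ℝ] S)
    (I : Submodule ℝ S) (hIc : IsClosed (I : Set S))
    (hIiso : I ≤ sympAnn J I)
    (L : Submodule ℝ S) :
    {v : S | v ∈ sympAnn J I ⊓ Iᗮ ∧
        ∃ u ∈ L ⊓ sympAnn J I, u - v ∈ (sympAnn J I ⊓ Iᗮ)ᗮ} =
      ((L ⊔ I : Submodule ℝ S) : Set S) ∩ ((sympAnn J I ⊓ Iᗮ : Submodule ℝ S) : Set S) := by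
  have : CompleteSpace I := hIc.completeSpace_coe
  have hI : I ≤ (sympAnn J I ⊓ Iᗮ)ᗮ := Submodule.le_orthogonal_inf_orthogonal _ I
  ext v
  constructor
  · rintro ⟨hvSI, u, ⟨huL, huA⟩, huv⟩
    have hwI : u - v ∈ I :=
      Submodule.inf_orthogonal_inf_orthogonal_le hIiso ⟨(sympAnn J I).sub_mem huA hvSI.1, huv⟩
    refine ⟨?_, hvSI⟩
    simpa using (L ⊔ I).sub_mem (Submodule.mem_sup_left huL) (Submodule.mem_sup_right hwI)
  · rintro ⟨hvLI, hvSI⟩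
    obtain ⟨l, hl, i, hi, rfl⟩ := Submodule.mem_sup.mp hvLI
    refine ⟨hvSI, l, ⟨hl, ?_⟩, ?_⟩
    · simpa using (sympAnn J I).sub_mem hvSI.1 (hIiso hi)
    · simpa using (sympAnn J I ⊓ Iᗮ)ᗮ.neg_mem (hI hi)

/-- If `L` is a Lagrangian subspace having clean intersection with the closed
isotropic subspace `I`, then the image `L_I` of `L ∩ I^♯` under the orthogonal
projection onto `S_I = I^♯ ∩ I^⊥` equals `(L + I) ∩ S_I`.  (The orthogonal
projection of `u` onto the closed subspace `S_I` is characterized as the unique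
`v ∈ S_I` with `u - v ∈ S_I^⊥`.) -/
theorem statement13
    (J : S →ₗ[ℝ] S)
    (hiso : ∀ u v : S, ⟪J u, J v⟫ = ⟪u, v⟫)
    (hJ2 : ∀ u : S, J (J u) = -u)
    (I : Submodule ℝ S) (hIc : IsClosed (I : Set S))
    (hIiso : I ≤ sympAnn J I)
    (L : Submodule ℝ S) (hLc : IsClosed (L : Set S))
    (hLag : L = sympAnn J L)
    (hclean₁ : L ⊓ I = ⊥)
    (hclean₂ : IsClosed ((L ⊔ I : Submodule ℝ S) : Set S)) :
    {v : S | v ∈ sympAnn J I ⊓ Iᗮ ∧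
        ∃ u ∈ L ⊓ sympAnn J I, u - v ∈ (sympAnn J I ⊓ Iᗮ)ᗮ} =
      ((L ⊔ I : Submodule ℝ S) : Set S) ∩ ((sympAnn J I ⊓ Iᗮ : Submodule ℝ S) : Set S) :=
  statement13_general J I hIc hIiso L
end

section
/- Let H be a real Hilbert space, I a closed subspace of H of finite codimension, F = I^⊥, and set I₀ = I × {0} ⊆ S(H) = H × H. Let L be a Lagrangian subspace of S(H) with L ∩ I₀ = {0} and L + I₀ closed. Then the symplectic reduction L_{I₀} = {(P_F x, y) : (x,y) ∈ L, y ∈ F} is a Lagrangian subspace of the finite-dimensional symplectic space F × F. -/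
open RealInnerProductSpace
open LinearMap (BilinForm)

/-!
With `J(u, v) = (v, -u)` one has `ω(p, q) = ⟪p, J q⟫` in the `L²` product `H × H`, so the bipolar
theorem of Hilbert spaces gives `A^ω^ω = closure A`. For `I₀ = I × 0` one has `I₀^ω = H × Iᗮ`, and
the modular law together with the closedness of `L + I₀` shows that `W = (L + I₀) ∩ I₀^ω`
satisfies `W^ω = W`. Finally `P_F × id` does not change `ω` against vectors whose second
component lies in `F`, which turns `W^ω = W` into the Lagrangian property of its image in `F × F`.
-/

namespace LinearMap.BilinForm

section CommRing

variable {R M : Type*} [CommRing R] [AddCommGroup M] [Module R M]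

theorem orthogonal_sup (B : BilinForm R M) (N N' : Submodule R M) :
    B.orthogonal (N ⊔ N') = B.orthogonal N ⊓ B.orthogonal N' := by
  refine le_antisymm (le_inf (orthogonal_le le_sup_left) (orthogonal_le le_sup_right)) ?_
  rintro m ⟨hN, hN'⟩ n hn
  obtain ⟨a, ha, b, hb, rfl⟩ := Submodule.mem_sup.mp hn
  rw [map_add, LinearMap.add_apply, hN a ha, hN' b hb, add_zero]

/-- `(L + I) ∩ I^ω` is the preimage of the reduction of `L` modulo the isotropic subspace `I`. -/
theorem orthogonal_sup_inf_orthogonal_eq_self {B : BilinForm R M} {L I : Submodule R M}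
    (hL : B.orthogonal L = L) (hI : I ≤ B.orthogonal I)
    (hLI : B.orthogonal (B.orthogonal (L ⊔ I)) = L ⊔ I) :
    B.orthogonal ((L ⊔ I) ⊓ B.orthogonal I) = (L ⊔ I) ⊓ B.orthogonal I := by
  have hmodular : B.orthogonal (L ⊔ I) ⊔ I = (L ⊔ I) ⊓ B.orthogonal I := by
    rw [orthogonal_sup, hL, inf_comm L, inf_sup_assoc_of_le L hI, inf_comm]
  calc B.orthogonal ((L ⊔ I) ⊓ B.orthogonal I)
      = B.orthogonal (B.orthogonal (L ⊔ I) ⊔ I) := by rw [hmodular]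
    _ = (L ⊔ I) ⊓ B.orthogonal I := by rw [orthogonal_sup, hLI]

end CommRing

section InnerProductSpace

variable {V E : Type*} [AddCommGroup V] [Module ℝ V] [NormedAddCommGroup E] [InnerProductSpace ℝ E]

theorem orthogonal_eq_comap_orthogonal_map {B : BilinForm ℝ V}
    (Φ Ψ : V →ₗ[ℝ] E) (hB : ∀ p q, B p q = ⟪Φ p, Ψ q⟫) (A : Submodule ℝ V) :
    B.orthogonal A = (A.map Φ)ᗮ.comap Ψ := by
  ext q
  simp only [mem_orthogonal_iff, hB, Submodule.mem_comap, Submodule.mem_orthogonal,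
    Submodule.mem_map, forall_exists_index, and_imp, forall_apply_eq_imp_iff₂]

theorem coe_orthogonal_orthogonal [TopologicalSpace V] [CompleteSpace E] {B : BilinForm ℝ V}
    (Φ Ψ : V ≃L[ℝ] E) (hB : ∀ p q, B p q = ⟪Φ p, Ψ q⟫) (hrefl : B.IsRefl)
    (A : Submodule ℝ V) :
    (B.orthogonal (B.orthogonal A) : Set V) = closure A := by
  have hflip : B.orthogonal (B.orthogonal A) = B.flip.orthogonal (B.orthogonal A) := by
    ext q
    exact ⟨fun h p hp => hrefl _ _ (h p hp), fun h p hp => hrefl _ _ (h p hp)⟩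
  have hmap : (B.orthogonal A).map (Ψ : V →ₗ[ℝ] E) = (A.map (Φ : V →ₗ[ℝ] E))ᗮ := by
    rw [orthogonal_eq_comap_orthogonal_map (Φ : V →ₗ[ℝ] E) Ψ hB,
      Submodule.map_comap_eq_of_surjective Ψ.surjective]
  rw [hflip, orthogonal_eq_comap_orthogonal_map (Ψ : V →ₗ[ℝ] E) Φ
      (fun p q => (hB q p).trans (real_inner_comm _ _)), hmap,
    Submodule.orthogonal_orthogonal_eq_closure, Submodule.comap_coe,
    Submodule.topologicalClosure_coe, Submodule.map_coe]
  exact (Φ.toHomeomorph.preimage_closure _).trans (congrArg closure (Φ.injective.preimage_image _))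

end InnerProductSpace

end LinearMap.BilinForm

section Symplectic

variable {H : Type*} [NormedAddCommGroup H] [InnerProductSpace ℝ H]

variable (H) in
def symplecticForm : BilinForm ℝ (H × H) :=
  LinearMap.mk₂ ℝ (fun p q => ⟪q.2, p.1⟫ - ⟪q.1, p.2⟫)
    (fun p p' q => by simp only [Prod.fst_add, Prod.snd_add, inner_add_right]; ring)
    (fun c p q => by simp only [Prod.smul_fst, Prod.smul_snd, inner_smul_right, smul_eq_mul]; ring)
    (fun p q q' => by simp only [Prod.fst_add, Prod.snd_add, inner_add_left]; ring)
    (fun c p q => by simp only [Prod.smul_fst, Prod.smul_snd, inner_smul_left, smul_eq_mul,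
      RCLike.conj_to_real]; ring)

@[simp]
theorem symplecticForm_apply (p q : H × H) :
    symplecticForm H p q = ⟪q.2, p.1⟫ - ⟪q.1, p.2⟫ :=
  rfl

theorem symplecticForm_isRefl : (symplecticForm H).IsRefl := fun p q h => by
  rw [symplecticForm_apply] at h
  rw [symplecticForm_apply, real_inner_comm q.1 p.2, real_inner_comm q.2 p.1]
  linarith

theorem coe_symplecticForm_orthogonal_orthogonal [CompleteSpace H] (A : Submodule ℝ (H × H)) :
    ((symplecticForm H).orthogonal ((symplecticForm H).orthogonal A) : Set (H × H)) =
      closure A := by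
  let Φ := (WithLp.prodContinuousLinearEquiv 2 ℝ H H).symm
  let J := (ContinuousLinearEquiv.prodComm ℝ H H).trans
    ((ContinuousLinearEquiv.refl ℝ H).prodCongr (ContinuousLinearEquiv.neg ℝ))
  refine (symplecticForm H).coe_orthogonal_orthogonal Φ (J.trans Φ) (fun p q => ?_)
    symplecticForm_isRefl A
  change _ = ⟪p.1, q.2⟫ + ⟪p.2, -q.1⟫
  rw [symplecticForm_apply, inner_neg_right, real_inner_comm, real_inner_comm q.1, sub_eq_add_neg]

theorem symplecticForm_orthogonal_prod (A B : Submodule ℝ H) :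
    (symplecticForm H).orthogonal (A.prod B) = Bᗮ.prod Aᗮ := by
  ext q
  simp only [LinearMap.BilinForm.mem_orthogonal_iff, symplecticForm_apply, Submodule.mem_prod,
    Submodule.mem_orthogonal, Prod.forall]
  constructor
  · intro h
    refine ⟨fun b hb => ?_, fun a ha => ?_⟩
    · simpa [real_inner_comm] using h 0 b ⟨zero_mem A, hb⟩
    · simpa [real_inner_comm] using h a 0 ⟨ha, zero_mem B⟩
  · rintro ⟨h₁, h₂⟩ a b ⟨ha, hb⟩
    rw [real_inner_comm, h₂ a ha, real_inner_comm, h₁ b hb, sub_zero]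

section Projection

variable {K : Submodule ℝ H} [K.HasOrthogonalProjection]

theorem inner_starProjection_left_of_mem (x : H) {y : H} (hy : y ∈ K) :
    ⟪K.starProjection x, y⟫ = ⟪x, y⟫ := by
  rw [Submodule.inner_starProjection_left_eq_right, Submodule.starProjection_eq_self_iff.mpr hy]

theorem symplecticForm_starProjection_left (p q : H × H) (hq : q.2 ∈ K) :
    symplecticForm H (K.starProjection p.1, p.2) q = symplecticForm H p q := by
  rw [symplecticForm_apply, symplecticForm_apply, real_inner_comm,
    inner_starProjection_left_of_mem _ hq, real_inner_comm]

theorem symplecticForm_starProjection_right (p q : H × H) (hp : p.2 ∈ K) :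
    symplecticForm H p (K.starProjection q.1, q.2) = symplecticForm H p q := by
  rw [symplecticForm_apply, symplecticForm_apply, inner_starProjection_left_of_mem _ hp]

/-- Projecting a Lagrangian subspace of `H × K` along the first factor gives a Lagrangian
subspace of `K × K`. -/
theorem map_prodMap_starProjection_eq {W : Submodule ℝ (H × H)}
    (hWK : W ≤ (⊤ : Submodule ℝ H).prod K) (hW : (symplecticForm H).orthogonal W = W) :
    W.map ((K.starProjection : H →ₗ[ℝ] H).prodMap LinearMap.id) =
      K.prod K ⊓ (symplecticForm H).orthogonal
        (W.map ((K.starProjection : H →ₗ[ℝ] H).prodMap LinearMap.id)) := by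
  have hsnd : ∀ w ∈ W, w.2 ∈ K := fun w hw => (hWK hw).2
  apply le_antisymm
  · rintro _ ⟨w, hw, rfl⟩
    refine ⟨⟨K.starProjection_apply_mem w.1, hsnd w hw⟩, ?_⟩
    rintro _ ⟨v, hv, rfl⟩
    change symplecticForm H (K.starProjection v.1, v.2) (K.starProjection w.1, w.2) = 0
    rw [symplecticForm_starProjection_left v (K.starProjection w.1, w.2) (hsnd w hw),
      symplecticForm_starProjection_right v w (hsnd v hv)]
    exact (hW.symm ▸ hw : w ∈ (symplecticForm H).orthogonal W) v hv
  · rintro q ⟨⟨hq₁, hq₂⟩, hq⟩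
    have hqW : q ∈ (symplecticForm H).orthogonal W := fun w hw => by
      rw [← symplecticForm_starProjection_left w q hq₂]
      exact hq _ (Submodule.mem_map_of_mem hw)
    refine ⟨q, hW ▸ hqW, ?_⟩
    rw [LinearMap.prodMap_apply, ContinuousLinearMap.coe_coe,
      Submodule.starProjection_eq_self_iff.mpr hq₁, LinearMap.id_apply]

end Projection

theorem coe_map_prodMap_starProjection_sup_prod_bot [CompleteSpace H] (I : Submodule ℝ H)
    (L : Submodule ℝ (H × H)) :
    (((L ⊔ I.prod ⊥) ⊓ (⊤ : Submodule ℝ H).prod Iᗮ).map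
        ((Iᗮ.starProjection : H →ₗ[ℝ] H).prodMap LinearMap.id) : Set (H × H)) =
      {q | ∃ p ∈ L, p.2 ∈ Iᗮ ∧ q = (((Iᗮ.orthogonalProjectionOnto p.1 : H), p.2) : H × H)} := by
  ext q
  constructor
  · rintro ⟨_, ⟨hw, -, hw₂⟩, rfl⟩
    obtain ⟨l, hl, ⟨i, j⟩, ⟨hi, hj⟩, rfl⟩ := Submodule.mem_sup.mp hw
    obtain rfl : j = 0 := (Submodule.mem_bot ℝ).mp hj
    have hPi : Iᗮ.starProjection i = 0 :=
      (Iᗮ.starProjection_apply_eq_zero_iff).mpr (I.le_orthogonal_orthogonal hi)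
    refine ⟨l, hl, by simpa using hw₂, ?_⟩
    simp [hPi]
  · rintro ⟨p, hp, hp₂, rfl⟩
    exact ⟨p, ⟨Submodule.mem_sup_left hp, trivial, hp₂⟩, rfl⟩

end Symplectic

theorem statement14_general {H : Type*} [NormedAddCommGroup H] [InnerProductSpace ℝ H] [CompleteSpace H]
    (I : Submodule ℝ H)
    (L : Submodule ℝ (H × H))
    (hLag : (L : Set (H × H)) =
      {q | ∀ p ∈ L, (⟪q.2, p.1⟫ - ⟪q.1, p.2⟫ : ℝ) = 0})
    (hclean₂ : IsClosed ((L ⊔ I.prod ⊥ : Submodule ℝ (H × H)) : Set (H × H))) :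
    ∃ M : Submodule ℝ (H × H),
      (M : Set (H × H)) =
        {q | ∃ p ∈ L, p.2 ∈ Iᗮ ∧ q = (((Iᗮ.orthogonalProjectionOnto p.1 : H), p.2) : H × H)} ∧
      M ≤ Iᗮ.prod Iᗮ ∧
      (M : Set (H × H)) =
        {q | q ∈ Iᗮ.prod Iᗮ ∧ ∀ p ∈ M, (⟪q.2, p.1⟫ - ⟪q.1, p.2⟫ : ℝ) = 0} := by
  have hL : (symplecticForm H).orthogonal L = L := (SetLike.coe_injective hLag).symm
  have hI₀ : (symplecticForm H).orthogonal (I.prod ⊥) = (⊤ : Submodule ℝ H).prod Iᗮ := by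
    rw [symplecticForm_orthogonal_prod, Submodule.bot_orthogonal_eq_top]
  have hLI : (symplecticForm H).orthogonal ((symplecticForm H).orthogonal (L ⊔ I.prod ⊥)) =
      L ⊔ I.prod ⊥ :=
    SetLike.coe_injective ((coe_symplecticForm_orthogonal_orthogonal _).trans hclean₂.closure_eq)
  have hW := LinearMap.BilinForm.orthogonal_sup_inf_orthogonal_eq_self hL
    (hI₀ ▸ Submodule.prod_mono le_top bot_le) hLI
  rw [hI₀] at hW
  have hM := map_prodMap_starProjection_eq inf_le_right hW
  exact ⟨_, coe_map_prodMap_starProjection_sup_prod_bot I L, hM.le.trans inf_le_left,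
    congrArg SetLike.coe hM⟩

/-- Let `I` be a closed finite-codimensional subspace of `H`, `F = I^⊥`, and
`I₀ = I × {0} ⊆ H × H`.  If `L` is a Lagrangian subspace of `S(H) = H × H` with
clean intersection with `I₀`, then its symplectic reduction
`L_{I₀} = {(P_F x, y) : (x,y) ∈ L, y ∈ F}` is a Lagrangian subspace of the
finite-dimensional symplectic space `F × F`. -/
theorem statement14 {H : Type*} [NormedAddCommGroup H] [InnerProductSpace ℝ H] [CompleteSpace H]
    (I : Submodule ℝ H) (hIc : IsClosed (I : Set H))
    (hcof : FiniteDimensional ℝ ↥Iᗮ)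
    (L : Submodule ℝ (H × H))
    (hLc : IsClosed (L : Set (H × H)))
    (hLag : (L : Set (H × H)) =
      {q | ∀ p ∈ L, (⟪q.2, p.1⟫ - ⟪q.1, p.2⟫ : ℝ) = 0})
    (hclean₁ : L ⊓ I.prod ⊥ = ⊥)
    (hclean₂ : IsClosed ((L ⊔ I.prod ⊥ : Submodule ℝ (H × H)) : Set (H × H))) :
    ∃ M : Submodule ℝ (H × H),
      (M : Set (H × H)) =
        {q | ∃ p ∈ L, p.2 ∈ Iᗮ ∧ q = (((Iᗮ.orthogonalProjectionOnto p.1 : H), p.2) : H × H)} ∧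
      M ≤ Iᗮ.prod Iᗮ ∧
      (M : Set (H × H)) =
        {q | q ∈ Iᗮ.prod Iᗮ ∧ ∀ p ∈ M, (⟪q.2, p.1⟫ - ⟪q.1, p.2⟫ : ℝ) = 0} :=
  statement14_general I L hLag hclean₂
end

section
/- Let H be a real Hilbert space, F ⊆ H a finite-dimensional subspace, and A : D ⊆ H → H a self-adjoint Fredholm operator with F^⊥ ∩ ker A = {0}. Let L = {(P_F u, Au) : u ∈ A^{-1}(F)} ⊆ F × F be the symplectic reduction of Graph(A), and let M ⊆ F × F be a Lagrangian subspace transverse to both {0} × F and L, so that M = Graph(-R) for a symmetric operator R on F. Then, with K = I_F R P_F (where P_F is the orthogonal projection onto F and I_F the inclusion of F into H), the operator A + K : D → H is injective, hence bijective with bounded inverse. -/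
/-!
Put `K = I_F R P_F` and `T = A + K`. As `K` is bounded and symmetric, `T` is again self-adjoint,
hence closed. Injectivity of `T` is exactly the transversality of `L` and `Graph (-R)` together
with `Fᗮ ∩ ker A = 0`: if `A x = -K x`, then `(P_F x, A x) = (u, -R u)` with `u = P_F x`.
Since `ran A ⊆ ran T + F`, the range of `T` has finite codimension. Viewed on its graph, `T` is an
injective bounded operator between Banach spaces, so a finite-codimensional range is closed; as
`(ran T)ᗮ = ker T* = ker T = 0`, `T` is onto, and the open mapping theorem on the graph gives the
bounded inverse.
-/

open RealInnerProductSpace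

namespace Submodule

theorem CoFG.of_le_sup {R M : Type*} [Ring R] [AddCommGroup M] [Module R M]
    {p q t : Submodule R M} (hq : q.CoFG) (ht : t.FG) (h : q ≤ p ⊔ t) : p.CoFG := by
  set φ := p.factor (le_sup_left : p ≤ p ⊔ t)
  have hker : LinearMap.ker φ = t.map p.mkQ := by
    rw [ker_mapQ, comap_id, map_sup, mkQ_map_self, bot_sup_eq]
  have hsup : (p ⊔ t).CoFG := hq.of_le h
  refine ⟨fg_of_fg_map_of_fg_inf_ker φ ?_ ?_⟩
  · rw [map_top, LinearMap.range_eq_top.mpr (factor_surjective _)]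
    exact hsup.fg_top
  · rw [top_inf_eq, hker]
    exact ht.map _

end Submodule

namespace ContinuousLinearMap

variable {𝕜 E F : Type*} [NontriviallyNormedField 𝕜] [CompleteSpace 𝕜]
  [NormedAddCommGroup E] [NormedSpace 𝕜 E] [CompleteSpace E]
  [NormedAddCommGroup F] [NormedSpace 𝕜 F] [CompleteSpace F]

theorem isClosed_range_of_ker_eq_bot_of_cofg (f : E →L[𝕜] F) (hf : f.ker = ⊥)
    (hcofg : f.range.CoFG) : IsClosed (f.range : Set F) := by
  obtain ⟨G, hG⟩ := f.range.exists_isCompl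
  have : FiniteDimensional 𝕜 G := .of_fg (hcofg.fg_of_isCompl hG)
  exact f.closed_complemented_range_of_isCompl_of_ker_eq_bot G hG G.closed_of_finiteDimensional hf

end ContinuousLinearMap

namespace LinearPMap

variable {𝕜 E F : Type*} [NontriviallyNormedField 𝕜]
  [NormedAddCommGroup E] [NormedSpace 𝕜 E] [NormedAddCommGroup F] [NormedSpace 𝕜 F]
  {f : E →ₗ.[𝕜] F}

def graphSndL (f : E →ₗ.[𝕜] F) : f.graph →L[𝕜] F :=
  (ContinuousLinearMap.snd 𝕜 E F).comp f.graph.subtypeL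

theorem range_graphSndL : f.graphSndL.range = LinearMap.range f.toFun := by
  rw [← graph_map_snd_eq_range]
  ext y
  simp [graphSndL]

theorem ker_graphSndL (hf : LinearMap.ker f.toFun = ⊥) : f.graphSndL.ker = ⊥ := by
  refine (Submodule.eq_bot_iff _).mpr fun ⟨⟨x, y⟩, hxy⟩ hy => ?_
  replace hy : y = 0 := hy
  obtain ⟨z, rfl, hz⟩ := (mem_graph_iff f).mp hxy
  obtain rfl : z = 0 := (Submodule.eq_bot_iff _).mp hf z (hz.trans hy)
  simp [hy]

variable [CompleteSpace E] [CompleteSpace F]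

theorem IsClosed.exists_continuousLinearMap_inverse (hf : f.IsClosed)
    (hker : LinearMap.ker f.toFun = ⊥) (hrange : LinearMap.range f.toFun = ⊤) :
    ∃ B : F →L[𝕜] E, (∀ x : f.domain, B (f x) = x) ∧
      ∀ y : F, ∃ x : f.domain, (x : E) = B y ∧ f x = y := by
  have : CompleteSpace f.graph := hf.completeSpace_coe
  let e := ContinuousLinearEquiv.ofBijective f.graphSndL (ker_graphSndL hker)
    (range_graphSndL.trans hrange)
  refine ⟨(ContinuousLinearMap.fst 𝕜 E F).comp (f.graph.subtypeL.comp e.symm.toContinuousLinearMap),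
    fun x => ?_, fun y => ?_⟩
  · have : e.symm (f x) = ⟨((x : E), f x), f.mem_graph x⟩ := e.symm_apply_eq.mpr rfl
    simp [this]
  · obtain ⟨x, hx, hfx⟩ := (mem_graph_iff f).mp (e.symm y).2
    exact ⟨x, hx, hfx.trans (e.apply_symm_apply y)⟩

theorem IsClosed.isClosed_range [CompleteSpace 𝕜] (hf : f.IsClosed) (hker : LinearMap.ker f.toFun = ⊥)
    (hcofg : (LinearMap.range f.toFun).CoFG) : _root_.IsClosed (LinearMap.range f.toFun : Set F) := by
  have : CompleteSpace f.graph := hf.completeSpace_coe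
  rw [← range_graphSndL] at hcofg ⊢
  exact f.graphSndL.isClosed_range_of_ker_eq_bot_of_cofg (ker_graphSndL hker) hcofg

end LinearPMap

section SelfAdjoint

open LinearPMap InnerProductSpace

variable {𝕜 E : Type*} [RCLike 𝕜] [NormedAddCommGroup E] [InnerProductSpace 𝕜 E] [CompleteSpace E]
  {A : E →ₗ.[𝕜] E}

theorem IsSelfAdjoint.isFormalAdjoint (hA : IsSelfAdjoint A) : A.IsFormalAdjoint A := by
  have h := adjoint_isFormalAdjoint hA.dense_domain
  rwa [isSelfAdjoint_def.mp hA] at h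

theorem IsSelfAdjoint.vadd {K : E →L[𝕜] E} (hK : IsSelfAdjoint K) (hA : IsSelfAdjoint A) :
    IsSelfAdjoint ((K : E →ₗ[𝕜] E) +ᵥ A) := by
  set T := (K : E →ₗ[𝕜] E) +ᵥ A
  have hd : Dense (T.domain : Set E) := hA.dense_domain
  have hKsymm : ∀ u v : E, ⟪K u, v⟫_𝕜 = ⟪u, K v⟫_𝕜 := hK.isSymmetric
  have hAA : A† ≤ A := le_of_eq (isSelfAdjoint_def.mp hA)
  have hT : T.IsFormalAdjoint T := fun x y => by
    simp only [T, vadd_apply, ContinuousLinearMap.coe_coe, inner_add_left, inner_add_right]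
    rw [hKsymm, hA.isFormalAdjoint]
  have key : ∀ y : T†.domain, ∃ hy : (y : E) ∈ A.domain, T ⟨y, hy⟩ = T† y := by
    intro y
    have hy : (y : E) ∈ A†.domain := mem_adjoint_domain_of_exists _ ⟨T† y - K y, fun x => by
      rw [inner_sub_left, hKsymm, adjoint_isFormalAdjoint hd y x]
      simp [T, vadd_apply, inner_add_right]⟩
    have hAy : A† ⟨y, hy⟩ = T† y - K y := adjoint_apply_eq hA.dense_domain _ fun x => by
      rw [inner_sub_left, hKsymm, adjoint_isFormalAdjoint hd y x]
      simp [T, vadd_apply, inner_add_right]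
    refine ⟨hAA.1 hy, ?_⟩
    rw [vadd_apply, ← hAA.2 (x := ⟨y, hy⟩) rfl, hAy]
    simp
  refine le_antisymm (show T† ≤ T from ?_) (hT.le_adjoint hd)
  exact ⟨fun y hy => (key ⟨y, hy⟩).1, fun y z hyz => by
    obtain ⟨hy, h⟩ := key y
    rw [← h]
    exact congrArg T (Subtype.ext hyz)⟩

theorem IsSelfAdjoint.range_eq_top {T : E →ₗ.[𝕜] E} (hT : IsSelfAdjoint T)
    (hker : LinearMap.ker T.toFun = ⊥) (hrange : IsClosed (LinearMap.range T.toFun : Set E)) :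
    LinearMap.range T.toFun = ⊤ := by
  have : CompleteSpace (LinearMap.range T.toFun) := hrange.completeSpace_coe
  refine Submodule.orthogonal_eq_bot_iff.mp ((Submodule.eq_bot_iff _).mpr fun z hz => ?_)
  have hz0 : ∀ x : T.domain, ⟪(0 : E), x⟫_𝕜 = ⟪z, T x⟫_𝕜 := fun x => by
    rw [inner_zero_left]
    exact (Submodule.inner_left_of_mem_orthogonal (LinearMap.mem_range_self _ x) hz).symm
  have hz' : z ∈ T†.domain := mem_adjoint_domain_of_exists _ ⟨0, hz0⟩
  have hTz : T† ⟨z, hz'⟩ = 0 := adjoint_apply_eq hT.dense_domain _ hz0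
  have hTT : T† ≤ T := le_of_eq (isSelfAdjoint_def.mp hT)
  have := (Submodule.eq_bot_iff _).mp hker ⟨z, hTT.1 hz'⟩ (by
    rw [LinearMap.mem_ker, ← hTz]
    exact (hTT.2 rfl).symm)
  exact congrArg Subtype.val this

end SelfAdjoint

theorem Submodule.isSelfAdjoint_subtypeL_comp_comp_orthogonalProjectionOnto
    {𝕜 E : Type*} [RCLike 𝕜] [NormedAddCommGroup E] [InnerProductSpace 𝕜 E] [CompleteSpace E]
    (U : Submodule 𝕜 E) [CompleteSpace U] {R : U →L[𝕜] U} (hR : IsSelfAdjoint R) :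
    IsSelfAdjoint (U.subtypeL ∘L R ∘L U.orthogonalProjectionOnto) := by
  rw [IsSelfAdjoint, ContinuousLinearMap.star_eq_adjoint, ContinuousLinearMap.adjoint_comp,
    ContinuousLinearMap.adjoint_comp, U.adjoint_subtypeL, U.adjoint_orthogonalProjectionOnto,
    hR.adjoint_eq, ContinuousLinearMap.comp_assoc]

theorem statement18_general {H : Type*} [NormedAddCommGroup H] [InnerProductSpace ℝ H] [CompleteSpace H]
    (A : H →ₗ.[ℝ] H) (hsa : A.adjoint = A)
    (hcoker : FiniteDimensional ℝ (H ⧸ LinearMap.range A.toFun))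
    (F : Submodule ℝ H) [FiniteDimensional ℝ F]
    (hFker : ∀ x : A.domain, (x : H) ∈ Fᗮ → A x = 0 → (x : H) = 0)
    (R : F →ₗ[ℝ] F)
    (hRsym : ∀ u v : F, ⟪((R u : F) : H), (v : H)⟫ = ⟪(u : H), ((R v : F) : H)⟫)
    -- transversality of `M = Graph (-R)` and the reduction `L` of the graph of `A`:
    (htrans : ∀ x : A.domain, ∀ u : F, A x ∈ F →
      (((Submodule.orthogonalProjectionOnto F (x : H) : F) : H), A x) = (((u : F) : H), -((R u : F) : H)) →
      ((u : F) : H) = 0 ∧ A x = 0) :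
    (∀ x : A.domain, A x + ((R (Submodule.orthogonalProjectionOnto F (x : H)) : F) : H) = 0 → (x : H) = 0) ∧
    ∃ B : H →L[ℝ] H,
      (∀ x : A.domain, B (A x + ((R (Submodule.orthogonalProjectionOnto F (x : H)) : F) : H)) = (x : H)) ∧
      (∀ y : H, ∃ x : A.domain,
        (x : H) = B y ∧ A x + ((R (Submodule.orthogonalProjectionOnto F (x : H)) : F) : H) = y) := by
  set K : H →L[ℝ] H := F.subtypeL ∘L LinearMap.toContinuousLinearMap R ∘L F.orthogonalProjectionOnto
  set T : H →ₗ.[ℝ] H := (K : H →ₗ[ℝ] H) +ᵥ A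
  have hT : ∀ x : A.domain, T x = A x + K x := fun x => add_comm _ _
  have hinj : ∀ x : A.domain, A x + K x = 0 → (x : H) = 0 := by
    intro x hx
    have hAx : A x = -K x := eq_neg_of_add_eq_zero_left hx
    obtain ⟨hPx, hAx0⟩ := htrans x (F.orthogonalProjectionOnto x)
      (hAx ▸ F.neg_mem (Subtype.coe_prop _)) (by rw [hAx]; rfl)
    exact hFker x (F.orthogonalProjectionOnto_eq_zero_iff.mp (by exact_mod_cast hPx)) hAx0
  have hker : LinearMap.ker T.toFun = ⊥ :=
    (Submodule.eq_bot_iff _).mpr fun x hx => Subtype.ext (hinj x ((hT x).symm.trans hx))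
  have hTsa : IsSelfAdjoint T :=
    (F.isSelfAdjoint_subtypeL_comp_comp_orthogonalProjectionOnto
      (LinearMap.IsSymmetric.isSelfAdjoint (A := LinearMap.toContinuousLinearMap R) hRsym)).vadd hsa
  have hcofg : (LinearMap.range T.toFun).CoFG := by
    refine Submodule.CoFG.of_le_sup hcoker (Module.Finite.iff_fg (N := F).mp inferInstance) ?_
    rintro _ ⟨x, rfl⟩
    refine Submodule.mem_sup.mpr ⟨T x, LinearMap.mem_range_self _ x, -K x,
      F.neg_mem (Subtype.coe_prop _), ?_⟩
    rw [hT]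
    abel
  obtain ⟨B, hBT, hTB⟩ := hTsa.isClosed.exists_continuousLinearMap_inverse hker
    (hTsa.range_eq_top hker (hTsa.isClosed.isClosed_range hker hcofg))
  exact ⟨hinj, B, fun x => (congrArg B (hT x)).symm.trans (hBT x),
    fun y => (hTB y).imp fun x hx => ⟨hx.1, (hT x).symm.trans hx.2⟩⟩

/-- Let `A` be a densely defined self-adjoint Fredholm operator, `F` a
finite-dimensional subspace with `F^⊥ ∩ ker A = {0}`, and let
`L = {(P_F u, A u) : u ∈ A⁻¹(F)} ⊆ F × F` be the symplectic reduction of the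
graph of `A`.  If `M = Graph(-R)` (with `R` symmetric on `F`) is a Lagrangian
subspace of `F × F` transverse to `L`, then with `K = I_F R P_F` the operator
`A + K` is injective, hence bijective with bounded inverse. -/
theorem statement18 {H : Type*} [NormedAddCommGroup H] [InnerProductSpace ℝ H] [CompleteSpace H]
    (A : H →ₗ.[ℝ] H) (hd : Dense (A.domain : Set H)) (hsa : A.adjoint = A)
    (hker : FiniteDimensional ℝ ↥(LinearMap.ker A.toFun))
    (hrange : IsClosed ((LinearMap.range A.toFun : Submodule ℝ H) : Set H))
    (hcoker : FiniteDimensional ℝ (H ⧸ LinearMap.range A.toFun))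
    (F : Submodule ℝ H) [FiniteDimensional ℝ F]
    (hFker : ∀ x : A.domain, (x : H) ∈ Fᗮ → A x = 0 → (x : H) = 0)
    (R : F →ₗ[ℝ] F)
    (hRsym : ∀ u v : F, ⟪((R u : F) : H), (v : H)⟫ = ⟪(u : H), ((R v : F) : H)⟫)
    -- transversality of `M = Graph (-R)` and the reduction `L` of the graph of `A`:
    (htrans : ∀ x : A.domain, ∀ u : F, A x ∈ F →
      (((Submodule.orthogonalProjectionOnto F (x : H) : F) : H), A x) = (((u : F) : H), -((R u : F) : H)) →
      ((u : F) : H) = 0 ∧ A x = 0) :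
    (∀ x : A.domain, A x + ((R (Submodule.orthogonalProjectionOnto F (x : H)) : F) : H) = 0 → (x : H) = 0) ∧
    ∃ B : H →L[ℝ] H,
      (∀ x : A.domain, B (A x + ((R (Submodule.orthogonalProjectionOnto F (x : H)) : F) : H)) = (x : H)) ∧
      (∀ y : H, ∃ x : A.domain,
        (x : H) = B y ∧ A x + ((R (Submodule.orthogonalProjectionOnto F (x : H)) : F) : H) = y) :=
  statement18_general A hsa hcoker F hFker R hRsym htrans
end

section
/- Let H be a real Hilbert space, I a closed cofinite subspace, F = I^⊥ finite-dimensional, and let Λ_I denote the set of Lagrangian subspaces L of S(H) = H × H with clean intersection with I₀ = I × {0} (i.e., L ∩ I₀ = {0}, L + I₀ closed). For a Lagrangian subspace L of F × F, define ε^I(L) := L + J I₀, where J(u,v) = (-v,u). Then ε^I(L) belongs to Λ_I, and the symplectic reduction of ε^I(L) modulo I₀ equals L (i.e., ρ^I ∘ ε^I = id on the Lagrangian Grassmannian of F × F). -/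
/-!
Let `Φ` be the orthogonal projection of `H × H` onto `F × F`, with kernel `I × I`. As `Φ` fixes
`L` pointwise, `ε(L) + I₀ = L + I × I = Φ⁻¹(L)` and `ε(L) = Φ⁻¹(L) ∩ (F × H)`. Both are closed
since `L`, being its own symplectic complement inside `F × F`, is closed; and intersecting
`Φ⁻¹(L)` with `F × F` gives back `L`. Because `Φ` is self-adjoint, the symplectic form of two
vectors whose first components lie in `F` does not change under `Φ`; this transports the
Lagrangian property from `L` to `ε(L)`.
-/

open RealInnerProductSpace

namespace SymplecticReduction

variable {H : Type*} [NormedAddCommGroup H] [InnerProductSpace ℝ H]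

def symplecticForm (q p : H × H) : ℝ := ⟪q.2, p.1⟫ - ⟪q.1, p.2⟫

def IsLagrangian (L : Submodule ℝ (H × H)) : Prop :=
  (L : Set (H × H)) = {q | ∀ p ∈ L, symplecticForm q p = 0}

def IsLagrangianIn (F L : Submodule ℝ (H × H)) : Prop :=
  (L : Set (H × H)) = {q | q ∈ F ∧ ∀ p ∈ L, symplecticForm q p = 0}

lemma IsLagrangianIn.symplecticForm_eq_zero {F L : Submodule ℝ (H × H)}
    (hLag : IsLagrangianIn F L) {q p : H × H} (hq : q ∈ L) (hp : p ∈ L) :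
    symplecticForm q p = 0 := by
  rw [← SetLike.mem_coe, hLag] at hq
  exact hq.2 p hp

lemma IsLagrangianIn.isClosed {F L : Submodule ℝ (H × H)} (hLag : IsLagrangianIn F L)
    (hF : IsClosed (F : Set (H × H))) : IsClosed (L : Set (H × H)) := by
  have hL : (L : Set (H × H)) = (F : Set (H × H)) ∩ ⋂ p ∈ L, {q | symplecticForm q p = 0} := by
    rw [hLag]
    ext q
    simp
  rw [hL]
  refine hF.inter (isClosed_biInter fun p _ => isClosed_eq ?_ continuous_const)
  unfold symplecticForm
  fun_prop

section Extension

variable {I : Submodule ℝ H} {L : Submodule ℝ (H × H)}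

variable (I) in
def extension (L : Submodule ℝ (H × H)) : Submodule ℝ (H × H) :=
  L ⊔ (⊥ : Submodule ℝ H).prod I

lemma extension_le_prod_top (hLF : L ≤ Iᗮ.prod Iᗮ) : extension I L ≤ Iᗮ.prod ⊤ :=
  sup_le (hLF.trans (Submodule.prod_mono le_rfl le_top)) (Submodule.prod_mono bot_le le_top)

lemma extension_inf_prod_bot (hLF : L ≤ Iᗮ.prod Iᗮ) : extension I L ⊓ I.prod ⊥ = ⊥ := by
  refine eq_bot_iff.mpr ((inf_le_inf_right _ (extension_le_prod_top hLF)).trans ?_)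
  rw [Submodule.prod_inf_prod, inf_comm, I.inf_orthogonal_eq_bot, top_inf_eq, Submodule.prod_bot]

end Extension

section Projection

variable (I : Submodule ℝ H) [I.HasOrthogonalProjection]

noncomputable def reductionProj : H × H →L[ℝ] H × H :=
  Iᗮ.starProjection.prodMap Iᗮ.starProjection

@[simp]
lemma reductionProj_apply (x : H × H) :
    reductionProj I x = (Iᗮ.starProjection x.1, Iᗮ.starProjection x.2) := rfl

lemma ker_reductionProj : LinearMap.ker (reductionProj I : H × H →ₗ[ℝ] H × H) = I.prod I := by
  have hker (v : H) : Iᗮ.starProjection v = 0 ↔ v ∈ I := by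
    conv_rhs => rw [← Submodule.orthogonal_orthogonal I, ← Submodule.ker_starProjection Iᗮ]
    exact LinearMap.mem_ker.symm
  ext x
  simp only [LinearMap.mem_ker, ContinuousLinearMap.coe_coe, reductionProj_apply, Prod.ext_iff,
    Prod.fst_zero, Prod.snd_zero, hker, Submodule.mem_prod]

lemma reductionProj_mem (x : H × H) : reductionProj I x ∈ Iᗮ.prod Iᗮ :=
  Submodule.mem_prod.mpr ⟨Iᗮ.starProjection_apply_mem _, Iᗮ.starProjection_apply_mem _⟩

lemma reductionProj_eq_self {x : H × H} (hx : x ∈ Iᗮ.prod Iᗮ) : reductionProj I x = x := by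
  obtain ⟨h1, h2⟩ := Submodule.mem_prod.mp hx
  simp [Submodule.starProjection_eq_self_iff.mpr h1, Submodule.starProjection_eq_self_iff.mpr h2]

lemma symplecticForm_reductionProj {q p : H × H} (hq : q.1 ∈ Iᗮ) (hp : p.1 ∈ Iᗮ) :
    symplecticForm (reductionProj I q) (reductionProj I p) = symplecticForm q p := by
  have hPq := Submodule.starProjection_eq_self_iff.mpr hq
  have hPp := Submodule.starProjection_eq_self_iff.mpr hp
  simp only [symplecticForm, reductionProj_apply, hPq, hPp]
  rw [Submodule.inner_starProjection_left_eq_right, hPp,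
    ← Submodule.inner_starProjection_left_eq_right, hPq]

variable {I} {L : Submodule ℝ (H × H)}

lemma map_reductionProj (hLF : L ≤ Iᗮ.prod Iᗮ) :
    L.map (reductionProj I : H × H →ₗ[ℝ] H × H) = L := by
  ext x
  constructor
  · rintro ⟨y, hy, rfl⟩
    simpa [reductionProj_eq_self I (hLF hy)] using hy
  · intro hx
    exact ⟨x, hx, reductionProj_eq_self I (hLF hx)⟩

lemma comap_reductionProj (hLF : L ≤ Iᗮ.prod Iᗮ) :
    L.comap (reductionProj I : H × H →ₗ[ℝ] H × H) = L ⊔ I.prod I := by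
  conv_lhs => rw [← map_reductionProj hLF]
  rw [Submodule.comap_map_eq, ker_reductionProj]

lemma comap_reductionProj_inf_prod (hLF : L ≤ Iᗮ.prod Iᗮ) :
    L.comap (reductionProj I : H × H →ₗ[ℝ] H × H) ⊓ Iᗮ.prod Iᗮ = L := by
  ext x
  simp only [Submodule.mem_inf, Submodule.mem_comap, ContinuousLinearMap.coe_coe]
  constructor
  · rintro ⟨hx, hxF⟩
    rwa [reductionProj_eq_self I hxF] at hx
  · intro hx
    exact ⟨by rwa [reductionProj_eq_self I (hLF hx)], hLF hx⟩

lemma extension_sup_prod_bot (hLF : L ≤ Iᗮ.prod Iᗮ) :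
    extension I L ⊔ I.prod ⊥ = L.comap (reductionProj I : H × H →ₗ[ℝ] H × H) := by
  rw [extension, sup_assoc, Submodule.prod_sup_prod, bot_sup_eq, sup_bot_eq,
    comap_reductionProj hLF]

lemma extension_eq_comap_inf (hLF : L ≤ Iᗮ.prod Iᗮ) :
    extension I L = L.comap (reductionProj I : H × H →ₗ[ℝ] H × H) ⊓ Iᗮ.prod ⊤ := by
  refine le_antisymm (le_inf (extension_sup_prod_bot hLF ▸ le_sup_left)
    (extension_le_prod_top hLF)) ?_
  rintro x ⟨hx, hx1, -⟩
  have hx2 : x.2 - Iᗮ.starProjection x.2 ∈ I := by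
    simpa only [Submodule.orthogonal_orthogonal] using Iᗮ.sub_starProjection_mem_orthogonal x.2
  refine Submodule.mem_sup.mpr
    ⟨reductionProj I x, hx, x - reductionProj I x, ?_, add_sub_cancel _ _⟩
  exact Submodule.mem_prod.mpr ⟨by simp [Submodule.starProjection_eq_self_iff.mpr hx1], hx2⟩

lemma isClosed_extension_sup_prod_bot (hLF : L ≤ Iᗮ.prod Iᗮ)
    (hL : IsClosed (L : Set (H × H))) :
    IsClosed ((extension I L ⊔ I.prod ⊥ : Submodule ℝ (H × H)) : Set (H × H)) := by
  rw [extension_sup_prod_bot hLF]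
  exact hL.preimage (reductionProj I).continuous

lemma isClosed_extension (hLF : L ≤ Iᗮ.prod Iᗮ) (hL : IsClosed (L : Set (H × H))) :
    IsClosed (extension I L : Set (H × H)) := by
  rw [extension_eq_comap_inf hLF, Submodule.coe_inf, Submodule.prod_coe, Submodule.top_coe]
  exact (hL.preimage (reductionProj I).continuous).inter
    (I.isClosed_orthogonal.prod isClosed_univ)

lemma isLagrangian_extension (hLF : L ≤ Iᗮ.prod Iᗮ) (hLag : IsLagrangianIn (Iᗮ.prod Iᗮ) L) :
    IsLagrangian (extension I L) := by
  have hmem (x : H × H) : x ∈ extension I L ↔ reductionProj I x ∈ L ∧ x.1 ∈ Iᗮ := by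
    rw [extension_eq_comap_inf hLF]
    simp only [Submodule.mem_inf, Submodule.mem_comap, ContinuousLinearMap.coe_coe,
      Submodule.mem_prod, Submodule.mem_top, and_true]
  ext q
  constructor
  · intro hq p hp
    obtain ⟨hq, hq1⟩ := (hmem q).mp hq
    obtain ⟨hp, hp1⟩ := (hmem p).mp hp
    rw [← symplecticForm_reductionProj I hq1 hp1]
    exact hLag.symplecticForm_eq_zero hq hp
  · intro hq
    have hq1 : q.1 ∈ Iᗮ := fun u hu => by
      have h0u := hq (0, u) (Submodule.mem_sup_right (Submodule.mem_prod.mpr ⟨rfl, hu⟩))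
      simp only [symplecticForm, inner_zero_right, zero_sub, neg_eq_zero] at h0u
      rwa [real_inner_comm]
    refine (hmem q).mpr ⟨?_, hq1⟩
    rw [← SetLike.mem_coe, hLag]
    refine ⟨reductionProj_mem I q, fun p hp => ?_⟩
    rw [← reductionProj_eq_self I (hLF hp),
      symplecticForm_reductionProj I hq1 (Submodule.mem_prod.mp (hLF hp)).1]
    exact hq p (Submodule.mem_sup_left hp)

end Projection

end SymplecticReduction

open SymplecticReduction

theorem statement19_general {H : Type*} [NormedAddCommGroup H] [InnerProductSpace ℝ H] [CompleteSpace H]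
    (I : Submodule ℝ H) (hIc : IsClosed (I : Set H))
    (L : Submodule ℝ (H × H)) (hLF : L ≤ Iᗮ.prod Iᗮ)
    (hLag : (L : Set (H × H)) =
      {q | q ∈ Iᗮ.prod Iᗮ ∧ ∀ p ∈ L, (⟪q.2, p.1⟫ - ⟪q.1, p.2⟫ : ℝ) = 0}) :
    let I₀ : Submodule ℝ (H × H) := I.prod ⊥
    let εL : Submodule ℝ (H × H) := L ⊔ (⊥ : Submodule ℝ H).prod I
    εL ⊓ I₀ = ⊥ ∧
    IsClosed ((εL ⊔ I₀ : Submodule ℝ (H × H)) : Set (H × H)) ∧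
    IsClosed (εL : Set (H × H)) ∧
    (εL : Set (H × H)) = {q | ∀ p ∈ εL, (⟪q.2, p.1⟫ - ⟪q.1, p.2⟫ : ℝ) = 0} ∧
    (εL ⊔ I₀) ⊓ Iᗮ.prod Iᗮ = L := by
  intro I₀ εL
  have : CompleteSpace I := hIc.completeSpace_coe
  have hLag' : IsLagrangianIn (Iᗮ.prod Iᗮ) L := hLag
  have hL : IsClosed (L : Set (H × H)) := hLag'.isClosed <| by
    rw [Submodule.prod_coe]
    exact I.isClosed_orthogonal.prod I.isClosed_orthogonal
  refine ⟨extension_inf_prod_bot hLF, isClosed_extension_sup_prod_bot hLF hL,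
    isClosed_extension hLF hL, isLagrangian_extension hLF hLag', ?_⟩
  change (extension I L ⊔ I.prod ⊥) ⊓ Iᗮ.prod Iᗮ = L
  rw [extension_sup_prod_bot hLF, comap_reductionProj_inf_prod hLF]

/-- Let `I` be a closed cofinite subspace of `H`, `F = I^⊥`, `I₀ = I × {0}`.  For
a Lagrangian subspace `L` of `F × F`, the subspace `ε^I(L) := L + J I₀ = L + ({0} × I)`
is a Lagrangian subspace of `S(H)` having clean intersection with `I₀`, and its
symplectic reduction modulo `I₀`, namely `(ε^I(L) + I₀) ∩ (F × F)`, equals `L`. -/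
theorem statement19 {H : Type*} [NormedAddCommGroup H] [InnerProductSpace ℝ H] [CompleteSpace H]
    (I : Submodule ℝ H) (hIc : IsClosed (I : Set H))
    (hcof : FiniteDimensional ℝ ↥Iᗮ)
    (L : Submodule ℝ (H × H)) (hLF : L ≤ Iᗮ.prod Iᗮ)
    (hLag : (L : Set (H × H)) =
      {q | q ∈ Iᗮ.prod Iᗮ ∧ ∀ p ∈ L, (⟪q.2, p.1⟫ - ⟪q.1, p.2⟫ : ℝ) = 0}) :
    let I₀ : Submodule ℝ (H × H) := I.prod ⊥
    let εL : Submodule ℝ (H × H) := L ⊔ (⊥ : Submodule ℝ H).prod I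
    εL ⊓ I₀ = ⊥ ∧
    IsClosed ((εL ⊔ I₀ : Submodule ℝ (H × H)) : Set (H × H)) ∧
    IsClosed (εL : Set (H × H)) ∧
    (εL : Set (H × H)) = {q | ∀ p ∈ εL, (⟪q.2, p.1⟫ - ⟪q.1, p.2⟫ : ℝ) = 0} ∧
    (εL ⊔ I₀) ⊓ Iᗮ.prod Iᗮ = L :=
  statement19_general I hIc L hLF hLag
end
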